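/- arXiv:1912.02797 — 17 statements merged into one kernel-verified Lean document; each statement's English description precedes it below -/
import Mathlib

section
/- For n ≥ 1 agents with additive valuations whose item values lie in [0,1], there exists an allocation A and a payment vector p such that the pair (A, p) is envy-free, p i ≤ 1 for every agent i, the allocation A is EF1, and A is balanced: every bundle A_i has size ⌊m/n⌋ or ⌈m/n⌉. -/
/-!
Allocate the items in rounds, each round a maximum-weight matching of the agents to the remaining
items that matches as many agents as possible. An agent values her item of one round at least as
much as any item left for later rounds, so another agent's bundle minus its first item is worth
to her at most her own bundle: this is EF1, and balancedness is built in.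

For payments, consider the envy graph with weights `v_i(A_k) - v_i(A_i)`. Within one round,
passing each item one step back along a cycle of agents yields another matching, so no cycle has
positive weight; doing the same along a path `x₀ → ⋯ → x_r` and giving `x_r` her next-round item
bounds the path's envy in that round by `x_r`'s loss from this round's item to the next. Summed
over rounds, this telescopes to at most the value of `x_r`'s first item, hence `≤ 1`. The payment
`p_i`, the heaviest simple path starting at `i`, then eliminates envy.
-/

theorem List.map_formPerm {α : Type*} [DecidableEq α] (l : List α) (hl : l.Nodup) :
    l.map l.formPerm = l.rotate 1 := by
  refine List.ext_getElem (by simp) fun k hk _ => ?_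
  rw [List.getElem_map, List.formPerm_apply_getElem _ hl, List.getElem_rotate]

namespace FairDivision

open Finset Function

section Paths

variable {α : Type*} (w : α → α → ℝ)

def pathWeight (l : List α) : ℝ := (List.zipWith w l l.tail).sum

@[simp] theorem pathWeight_nil : pathWeight w [] = 0 := rfl

@[simp] theorem pathWeight_singleton (x : α) : pathWeight w [x] = 0 := rfl

@[simp] theorem pathWeight_cons_cons (x y : α) (l : List α) :
    pathWeight w (x :: y :: l) = w x y + pathWeight w (y :: l) := by
  simp [pathWeight]

@[simp] theorem pathWeight_zero (l : List α) : pathWeight (0 : α → α → ℝ) l = 0 := by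
  induction l with
  | nil => rfl
  | cons x l ih => cases l <;> simp_all

theorem pathWeight_append_cons (l₁ : List α) (x : α) (l₂ : List α) :
    pathWeight w (l₁ ++ x :: l₂) = pathWeight w (l₁ ++ [x]) + pathWeight w (x :: l₂) := by
  induction l₁ with
  | nil => simp
  | cons a l₁ ih => cases l₁ <;> simp_all [add_assoc]

theorem pathWeight_concat {l : List α} (hl : l ≠ []) (y : α) :
    pathWeight w (l ++ [y]) = pathWeight w l + w (l.getLast hl) y := by
  conv_lhs => rw [← List.dropLast_append_getLast hl, List.append_assoc, List.singleton_append,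
    pathWeight_append_cons, List.dropLast_append_getLast hl]
  simp

theorem pathWeight_add (w' : α → α → ℝ) (l : List α) :
    pathWeight (w + w') l = pathWeight w l + pathWeight w' l := by
  induction l with
  | nil => simp
  | cons x l ih => cases l <;> simp_all; ring

theorem sum_formPerm_eq_pathWeight [Fintype α] [DecidableEq α] (hw : ∀ i, w i i = 0)
    {l : List α} (hl : l ≠ []) (hnd : l.Nodup) :
    ∑ i, w i (l.formPerm i) = pathWeight w (l ++ [l.head hl]) := by
  obtain ⟨x, l, rfl⟩ := List.exists_cons_of_ne_nil hl
  calc ∑ i, w i ((x :: l).formPerm i)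
      = ∑ i ∈ (x :: l).toFinset, w i ((x :: l).formPerm i) := by
        refine (sum_subset (subset_univ _) fun i _ hi => ?_).symm
        rw [List.formPerm_apply_of_notMem (by simpa using hi), hw]
    _ = (List.zipWith w (x :: l) ((x :: l).map (x :: l).formPerm)).sum := by
        rw [List.sum_toFinset _ hnd, List.zipWith_map_right, List.zipWith_self]
    _ = pathWeight w (x :: l ++ [x]) := by
        have := List.zipWith_append (f := w) (l₁ := x :: l) (l₁' := [x]) (l₂ := l ++ [x])
          (l₂' := []) (by simp)
        rw [List.map_formPerm _ hnd, List.rotate_cons_succ, List.rotate_zero, pathWeight]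
        simp_all

theorem exists_potential_of_cycle_nonpos (C : ℝ)
    (hcycle : ∀ x l, (x :: l).Nodup → pathWeight w (x :: l ++ [x]) ≤ 0)
    (hpath : ∀ x l, (x :: l).Nodup → pathWeight w (x :: l) ≤ C) :
    ∃ p : α → ℝ, (∀ i, 0 ≤ p i) ∧ (∀ i, p i ≤ C) ∧ ∀ i k, p k + w i k ≤ p i := by
  let S : α → Set ℝ := fun i => (fun l => pathWeight w (i :: l)) '' {l | (i :: l).Nodup}
  have hS0 : ∀ i, (0 : ℝ) ∈ S i := fun i => ⟨[], by simp⟩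
  have hSC : ∀ i, ∀ c ∈ S i, c ≤ C := by
    rintro i _ ⟨l, hl, rfl⟩
    exact hpath i l hl
  have hbdd : ∀ i, BddAbove (S i) := fun i => ⟨C, hSC i⟩
  -- a walk that revisits `i` is dominated by its suffix after the cycle through `i`
  have hshort : ∀ i k l, (k :: l).Nodup →
      ∃ l', (i :: l').Nodup ∧ pathWeight w (i :: k :: l) ≤ pathWeight w (i :: l') := by
    intro i k l hl
    by_cases hi : i ∈ k :: l
    · obtain ⟨a, t, hat⟩ := List.append_of_mem hi
      rw [hat] at hl ⊢
      have hnd := (List.perm_middle.nodup_iff).1 hl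
      refine ⟨t, hnd.sublist (by simp), ?_⟩
      rw [← List.cons_append, pathWeight_append_cons]
      have := hcycle i a (hnd.sublist (by simp))
      simp only [List.cons_append] at this ⊢
      linarith
    · exact ⟨k :: l, List.nodup_cons.2 ⟨hi, hl⟩, le_rfl⟩
  refine ⟨fun i => sSup (S i), fun i => le_csSup (hbdd i) (hS0 i),
    fun i => csSup_le ⟨0, hS0 i⟩ (hSC i), fun i k => ?_⟩
  suffices sSup (S k) ≤ sSup (S i) - w i k by linarith
  refine csSup_le ⟨0, hS0 k⟩ ?_
  rintro _ ⟨l, hl, rfl⟩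
  obtain ⟨l', hl', hle⟩ := hshort i k l hl
  have := le_csSup (hbdd i) ⟨l', hl', rfl⟩
  simp only [pathWeight_cons_cons] at hle
  linarith

end Paths

section Matchings

variable {ι β : Type*} (v : ι → β → ℝ)

structure IsMatching (M : Finset β) (F : ι → Finset β) : Prop where
  subset : ∀ i, F i ⊆ M
  pairwise_disjoint : Pairwise (Disjoint on F)
  card_le_one : ∀ i, (F i).card ≤ 1

def welfare [Fintype ι] (F : ι → Finset β) : ℝ := ∑ i, ∑ j ∈ F i, v i j

def envy (A : ι → Finset β) (i k : ι) : ℝ := ∑ j ∈ A k, v i j - ∑ j ∈ A i, v i j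

structure IsMaxWeightMatching [Fintype ι] (M : Finset β) (F : ι → Finset β) : Prop
    extends IsMatching M F where
  welfare_le : ∀ G, IsMatching M G → welfare v G ≤ welfare v F

variable {v} {M O : Finset β} {F : ι → Finset β}

theorem IsMatching.comp_perm (hF : IsMatching M F) (σ : Equiv.Perm ι) : IsMatching M (F ∘ σ) :=
  ⟨fun i => hF.subset (σ i), fun _ _ h => hF.pairwise_disjoint (σ.injective.ne h),
    fun i => hF.card_le_one (σ i)⟩

theorem IsMatching.update [DecidableEq ι] (hF : IsMatching M F) (x : ι) (hOM : O ⊆ M)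
    (hO : O.card ≤ 1) (hOF : ∀ i, i ≠ x → Disjoint O (F i)) : IsMatching M (update F x O) := by
  refine ⟨fun i => ?_, fun i k hik => ?_, fun i => ?_⟩
  · rcases eq_or_ne i x with rfl | hi <;> simp [*, hF.subset]
  · by_cases hi : i = x <;> by_cases hk : k = x
    · exact absurd (hi.trans hk.symm) hik
    · subst hi; simpa [onFun, hk] using hOF k hk
    · subst hk; simpa [onFun, hi] using (hOF i hi).symm
    · simpa [onFun, hi, hk] using hF.pairwise_disjoint hik
  · rcases eq_or_ne i x with rfl | hi <;> simp [*, hF.card_le_one]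

theorem IsMatching.card_biUnion [Fintype ι] [DecidableEq β] (hF : IsMatching M F) :
    (univ.biUnion F).card = ∑ i, (F i).card :=
  Finset.card_biUnion fun _ _ _ _ h => hF.pairwise_disjoint h

theorem welfare_update [Fintype ι] [DecidableEq ι] (F : ι → Finset β) (x : ι) (O : Finset β) :
    welfare v (update F x O) = welfare v F - ∑ j ∈ F x, v x j + ∑ j ∈ O, v x j := by
  have split : ∀ G : ι → Finset β,
      welfare v G = ∑ j ∈ G x, v x j + ∑ i ∈ univ.erase x, ∑ j ∈ G i, v i j :=
    fun G => (add_sum_erase _ _ (mem_univ x)).symm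
  have rest : ∑ i ∈ univ.erase x, ∑ j ∈ update F x O i, v i j =
      ∑ i ∈ univ.erase x, ∑ j ∈ F i, v i j :=
    sum_congr rfl fun i hi => by rw [update_of_ne (ne_of_mem_erase hi)]
  rw [split, split F, update_self, rest]
  ring

theorem welfare_comp_perm_sub [Fintype ι] (F : ι → Finset β) (σ : Equiv.Perm ι) :
    welfare v (F ∘ σ) - welfare v F = ∑ i, envy v F i (σ i) := by
  simp [welfare, envy, sum_sub_distrib]

theorem IsMaxWeightMatching.pathWeight_envy_le [Fintype ι] [DecidableEq ι]
    (hF : IsMaxWeightMatching v M F) {l : List ι} {y : ι} (hl : (l ++ [y]).Nodup)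
    (hOM : O ⊆ M) (hO : O.card ≤ 1) (hOF : ∀ i, Disjoint O (F i)) :
    pathWeight (envy v F) (l ++ [y]) ≤ ∑ j ∈ F y, v y j - ∑ j ∈ O, v y j := by
  set σ := (l ++ [y]).formPerm
  have hne : l ++ [y] ≠ [] := by simp
  have hσy : σ y = (l ++ [y]).head hne := by cases l <;> simp [σ]
  -- move every agent of the path to its successor's item, and give `y` the free bundle `O`
  have hG := (hF.comp_perm σ).update y hOM hO fun i _ => hOF (σ i)
  have hperm := welfare_comp_perm_sub (v := v) F σ
  rw [sum_formPerm_eq_pathWeight (envy v F) (fun i => sub_self _) hne hl, pathWeight_concat _ hne,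
    List.getLast_append_singleton, ← hσy] at hperm
  have := hF.welfare_le _ hG
  rw [welfare_update, comp_apply] at this
  simp only [envy] at hperm
  linarith

theorem welfare_union [Fintype ι] [DecidableEq β] {B : ι → Finset β}
    (h : ∀ i, Disjoint (B i) (F i)) :
    welfare v (fun i => B i ∪ F i) = welfare v B + welfare v F := by
  simp [welfare, sum_union (h _), sum_add_distrib]

theorem envy_union [DecidableEq β] {B : ι → Finset β} (h : ∀ i, Disjoint (B i) (F i)) :
    envy v (fun i => B i ∪ F i) = envy v B + envy v F := by
  ext i k
  simp only [envy, sum_union (h _), Pi.add_apply]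
  ring

theorem exists_isMaxWeightMatching [Fintype ι] [DecidableEq ι] [Finite β] [DecidableEq β]
    (hv : ∀ i j, 0 ≤ v i j) (M : Finset β) :
    ∃ F, IsMaxWeightMatching v M F ∧ ∀ i, F i = ∅ → M ⊆ univ.biUnion F := by
  -- ties in weight are broken by the number of matched agents
  obtain ⟨F, hF, hmax⟩ := Set.exists_max_image {G : ι → Finset β | IsMatching M G}
    (fun G => toLex (welfare v G, welfare (fun _ _ => (1 : ℝ)) G)) (Set.toFinite _)
    ⟨fun _ => ∅, fun _ => empty_subset _, fun _ _ _ => disjoint_empty_left _, by simp⟩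
  refine ⟨F, ⟨hF, fun G hG => ?_⟩, fun i hi j hj => ?_⟩
  · rcases Prod.Lex.toLex_le_toLex.1 (hmax G hG) with h | h
    · exact h.le
    · exact h.1.le
  · by_contra hjF
    have hG := hF.update i (O := {j}) (singleton_subset_iff.2 hj) (card_singleton j).le
      fun k _ => disjoint_singleton_left.2 fun hjk => hjF (mem_biUnion.2 ⟨k, mem_univ k, hjk⟩)
    have hvij := hv i j
    rcases Prod.Lex.toLex_le_toLex.1 (hmax _ hG) with h | ⟨-, h⟩ <;>
      simp only [welfare_update, hi, sum_empty, sum_singleton] at h <;> linarith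

end Matchings

def IsBalancedSize (n c a : ℕ) : Prop := a = c / n ∨ a = (c + n - 1) / n

theorem IsBalancedSize.add_one {n c a : ℕ} (hn : 0 < n) (h : IsBalancedSize n c a) :
    IsBalancedSize n (c + n) (a + 1) := by
  have hceil : c + n + n - 1 = c + n - 1 + n := by omega
  unfold IsBalancedSize at h ⊢
  rw [hceil, Nat.add_div_right _ hn, Nat.add_div_right _ hn]
  omega

theorem isBalancedSize_of_le_one {n c a : ℕ} (ha : a ≤ 1) (hac : a ≤ c) (hcn : c < n) :
    IsBalancedSize n c a := by
  interval_cases a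
  · exact .inl (Nat.div_eq_of_lt hcn).symm
  · exact .inr (Nat.div_eq_of_lt_le (by omega) (by omega)).symm

section IteratedMatching

variable {ι β : Type*} [Fintype ι] (v : ι → β → ℝ)

/-- Invariants of an allocation `A` of `M` built from repeated maximum-weight matchings of the
remaining items; `F` is the first matching. -/
structure IsIteratedMatching (M : Finset β) (A F : ι → Finset β) : Prop where
  subset : ∀ i, A i ⊆ M
  pairwise_disjoint : Pairwise (Disjoint on A)
  exists_mem : ∀ j ∈ M, ∃ i, j ∈ A i
  balanced : ∀ i, IsBalancedSize (Fintype.card ι) M.card (A i).card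
  first_subset : ∀ i, F i ⊆ A i
  card_first_le_one : ∀ i, (F i).card ≤ 1
  eq_empty_of_first : ∀ i, F i = ∅ → A i = ∅
  value_le : ∀ i k, ∑ j ∈ A k, v i j ≤ ∑ j ∈ A i, v i j + ∑ j ∈ F k, v i j
  welfare_comp_perm_le : ∀ σ : Equiv.Perm ι, welfare v (A ∘ σ) ≤ welfare v A
  pathWeight_le : ∀ l y, (l ++ [y]).Nodup → pathWeight (envy v A) (l ++ [y]) ≤ ∑ j ∈ F y, v y j

variable {v} {M : Finset β} {A F : ι → Finset β}

theorem IsIteratedMatching.ef1 [DecidableEq β] (h : IsIteratedMatching v M A F) (i k : ι) :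
    A k = ∅ ∨ ∃ j ∈ A k, ∑ j' ∈ (A k).erase j, v i j' ≤ ∑ j' ∈ A i, v i j' := by
  by_cases hk : F k = ∅
  · exact .inl (h.eq_empty_of_first k hk)
  obtain ⟨j, hj⟩ := card_eq_one.1 (le_antisymm (h.card_first_le_one k)
    (nonempty_iff_ne_empty.2 hk).card_pos)
  have hjA : j ∈ A k := h.first_subset k (hj ▸ mem_singleton_self j)
  refine .inr ⟨j, hjA, ?_⟩
  have := h.value_le i k
  rw [hj, sum_singleton] at this
  rw [sum_erase_eq_sub hjA]
  linarith

theorem IsIteratedMatching.exists_payment [DecidableEq ι]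
    (h : IsIteratedMatching v M A F) (hv : ∀ i j, v i j ≤ 1) :
    ∃ p : ι → ℝ, (∀ i, 0 ≤ p i) ∧ (∀ i, p i ≤ 1) ∧
      ∀ i k, ∑ j ∈ A k, v i j + p k ≤ ∑ j ∈ A i, v i j + p i := by
  have hcycle : ∀ x l, (x :: l).Nodup → pathWeight (envy v A) (x :: l ++ [x]) ≤ 0 := by
    intro x l hl
    have key :=
      sum_formPerm_eq_pathWeight (envy v A) (fun i => sub_self _) (List.cons_ne_nil x l) hl
    rw [List.head_cons, ← welfare_comp_perm_sub] at key
    linarith [h.welfare_comp_perm_le (x :: l).formPerm]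
  have hpath : ∀ x l, (x :: l).Nodup → pathWeight (envy v A) (x :: l) ≤ 1 := by
    intro x l hl
    obtain ⟨l', y, hy⟩ := (List.eq_nil_or_concat' (x :: l)).resolve_left (List.cons_ne_nil x l)
    rw [hy] at hl ⊢
    refine (h.pathWeight_le l' y hl).trans ((sum_le_card_nsmul _ _ 1 fun j _ => hv y j).trans ?_)
    simpa using h.card_first_le_one y
  obtain ⟨p, hp0, hp1, hp⟩ := exists_potential_of_cycle_nonpos _ 1 hcycle hpath
  refine ⟨p, hp0, hp1, fun i k => ?_⟩
  have := hp i k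
  rw [envy] at this
  linarith

theorem isIteratedMatching_empty : IsIteratedMatching v ∅ (fun _ : ι => ∅) (fun _ => ∅) where
  subset _ := subset_rfl
  pairwise_disjoint _ _ _ := disjoint_empty_left _
  exists_mem := by simp
  balanced _ := .inl (by simp)
  first_subset _ := subset_rfl
  card_first_le_one := by simp
  eq_empty_of_first _ _ := rfl
  value_le := by simp
  welfare_comp_perm_le _ := by simp [welfare]
  pathWeight_le l y _ := by
    have : envy v (fun _ : ι => (∅ : Finset β)) = 0 := by ext; simp [envy]
    simp [this]

variable [DecidableEq β] {B F' : ι → Finset β}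

theorem IsIteratedMatching.disjoint_of_sdiff_biUnion
    (hB : IsIteratedMatching v (M \ univ.biUnion F) B F') (i k : ι) : Disjoint (B i) (F k) :=
  disjoint_of_subset_left (hB.subset i)
    (sdiff_disjoint.mono_right (subset_biUnion_of_mem F (mem_univ k)))

theorem isBalancedSize_card_union (hF : IsMatching M F) (hmax : ∀ i, F i = ∅ → M ⊆ univ.biUnion F)
    (hB : IsIteratedMatching v (M \ univ.biUnion F) B F') (i : ι) :
    IsBalancedSize (Fintype.card ι) M.card (B i ∪ F i).card := by
  have hsub : univ.biUnion F ⊆ M := biUnion_subset.2 fun k _ => hF.subset k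
  rw [card_union_of_disjoint (hB.disjoint_of_sdiff_biUnion i i)]
  by_cases hall : ∀ k, (F k).Nonempty
  · have hone : ∀ k, (F k).card = 1 := fun k => le_antisymm (hF.card_le_one k) (hall k).card_pos
    have hM : M.card = (M \ univ.biUnion F).card + Fintype.card ι := by
      have := card_le_card hsub
      rw [card_sdiff_of_subset hsub, hF.card_biUnion] at *
      simp only [hone, sum_const, card_univ, smul_eq_mul, mul_one] at *
      omega
    rw [hM, hone i]
    exact (hB.balanced i).add_one (Fintype.card_pos_iff.2 ⟨i⟩)
  · simp only [not_forall, not_nonempty_iff_eq_empty] at hall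
    obtain ⟨k, hk⟩ := hall
    have hMF : univ.biUnion F = M := subset_antisymm hsub (hmax k hk)
    have hBi : B i = ∅ := subset_empty.1 (by simpa [hMF] using hB.subset i)
    rw [hBi, card_empty, zero_add]
    refine isBalancedSize_of_le_one (hF.card_le_one i) (card_le_card (hF.subset i)) ?_
    calc M.card = ∑ k, (F k).card := by rw [← hMF, hF.card_biUnion]
      _ < ∑ _ : ι, 1 := sum_lt_sum (fun k _ => hF.card_le_one k) ⟨k, mem_univ k, by simp [hk]⟩
      _ = Fintype.card ι := by simp

theorem IsIteratedMatching.union [DecidableEq ι] (hF : IsMaxWeightMatching v M F)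
    (hmax : ∀ i, F i = ∅ → M ⊆ univ.biUnion F)
    (hB : IsIteratedMatching v (M \ univ.biUnion F) B F') :
    IsIteratedMatching v M (fun i => B i ∪ F i) F := by
  have hBF := hB.disjoint_of_sdiff_biUnion
  have hF'M : ∀ k, F' k ⊆ M := fun k => (hB.first_subset k).trans ((hB.subset k).trans sdiff_subset)
  have hleft : ∀ l y k, (l ++ [y]).Nodup →
      pathWeight (envy v F) (l ++ [y]) ≤ ∑ j ∈ F y, v y j - ∑ j ∈ F' k, v y j := fun l y k hl =>
    hF.pathWeight_envy_le hl (hF'M k) (hB.card_first_le_one k)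
      fun i => (hBF k i).mono_left (hB.first_subset k)
  refine ⟨fun i => union_subset ((hB.subset i).trans sdiff_subset) (hF.subset i),
    fun i k hik => ?_, fun j hj => ?_, isBalancedSize_card_union hF.toIsMatching hmax hB,
    fun i => subset_union_right, hF.card_le_one, fun i hi => ?_, fun i k => ?_, fun σ => ?_,
    fun l y hl => ?_⟩
  · exact disjoint_union_left.2 ⟨disjoint_union_right.2 ⟨hB.pairwise_disjoint hik, hBF i k⟩,
      disjoint_union_right.2 ⟨(hBF k i).symm, hF.pairwise_disjoint hik⟩⟩
  · by_cases hjF : j ∈ univ.biUnion F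
    · obtain ⟨i, -, hi⟩ := mem_biUnion.1 hjF
      exact ⟨i, mem_union_right _ hi⟩
    · obtain ⟨i, hi⟩ := hB.exists_mem j (mem_sdiff.2 ⟨hj, hjF⟩)
      exact ⟨i, mem_union_left _ hi⟩
  · have hM' : M \ univ.biUnion F = ∅ := sdiff_eq_empty_iff_subset.2 (hmax i hi)
    simpa [hi, hM'] using hB.subset i
  · have := hleft [] i k (by simp)
    simp only [List.nil_append, pathWeight_singleton] at this
    simp only [sum_union (hBF _ _)]
    linarith [hB.value_le i k]
  · change welfare v (fun i => (B ∘ σ) i ∪ (F ∘ σ) i) ≤ _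
    rw [welfare_union (B := B ∘ σ) (F := F ∘ σ) fun i => hBF (σ i) (σ i),
      welfare_union fun i => hBF i i]
    linarith [hB.welfare_comp_perm_le σ, hF.welfare_le _ (hF.comp_perm σ)]
  · rw [envy_union fun i => hBF i i, pathWeight_add]
    linarith [hB.pathWeight_le l y hl, hleft l y y hl]

theorem exists_isIteratedMatching [DecidableEq ι] [Nonempty ι] [Finite β]
    (hv : ∀ i j, 0 ≤ v i j) (M : Finset β) : ∃ A F : ι → Finset β, IsIteratedMatching v M A F := by
  induction M using Finset.strongInduction with
  | H M ih =>
    rcases M.eq_empty_or_nonempty with rfl | hM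
    · exact ⟨_, _, isIteratedMatching_empty⟩
    obtain ⟨F, hF, hmax⟩ := exists_isMaxWeightMatching hv M
    have hFne : (univ.biUnion F).Nonempty := by
      obtain ⟨i⟩ := ‹Nonempty ι›
      by_cases hi : F i = ∅
      · exact hM.mono (hmax i hi)
      · exact (nonempty_iff_ne_empty.2 hi).mono (subset_biUnion_of_mem F (mem_univ i))
    obtain ⟨B, F', hB⟩ :=
      ih _ (sdiff_ssubset (biUnion_subset.2 fun i _ => hF.subset i) hFne)
    exact ⟨_, F, hB.union hF hmax⟩

end IteratedMatching

end FairDivision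

open Finset FairDivision in
/-- For n ≥ 1 agents with additive valuations whose item values lie in
[0,1], there exists an allocation A and a payment vector p such that (A, p) is
envy-free, p i ≤ 1 for every agent i, A is EF1, and A is balanced: every bundle
has size ⌊m/n⌋ or ⌈m/n⌉. -/
theorem one_dollar_each_eliminates_envy
    (n m : ℕ) (hn : 1 ≤ n)
    (v : Fin n → Fin m → ℝ)
    (hv0 : ∀ i j, 0 ≤ v i j) (hv1 : ∀ i j, v i j ≤ 1) :
    ∃ (A : Fin n → Finset (Fin m)) (p : Fin n → ℝ),
      -- A is an allocation
      (∀ i k, i ≠ k → Disjoint (A i) (A k)) ∧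
      (Finset.univ.biUnion A = Finset.univ) ∧
      -- p is a payment vector and (A, p) is envy-free
      (∀ i, 0 ≤ p i) ∧
      (∀ i k : Fin n, (∑ j ∈ A i, v i j) + p i ≥ (∑ j ∈ A k, v i j) + p k) ∧
      -- subsidy at most one dollar per agent
      (∀ i, p i ≤ 1) ∧
      -- A is EF1
      (∀ i k : Fin n, A k = ∅ ∨
        ∃ j ∈ A k, (∑ j' ∈ A i, v i j') ≥ ∑ j' ∈ (A k).erase j, v i j') ∧
      -- A is balanced
      (∀ i, (A i).card = m / n ∨ (A i).card = (m + n - 1) / n) := by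
  have : NeZero n := ⟨by omega⟩
  obtain ⟨A, F, hA⟩ := exists_isIteratedMatching hv0 (univ : Finset (Fin m))
  obtain ⟨p, hp0, hp1, hp⟩ := hA.exists_payment hv1
  refine ⟨A, p, hA.pairwise_disjoint, ?_, hp0, hp, hp1, hA.ef1, fun i => ?_⟩
  · exact eq_univ_of_forall fun j => by simpa using hA.exists_mem j (mem_univ j)
  · simpa [IsBalancedSize] using hA.balanced i
end

section
/- For n ≥ 1 agents with additive valuations whose item values lie in [0,1], there exists an allocation A and a payment vector p such that the pair (A, p) is envy-free and the total subsidy satisfies ∑_{i} p i ≤ n − 1. -/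
/-!
Allocate the items in rounds, each round handing out a maximum-weight matching between the
agents and the remaining items, and weigh the envy graph by `v_i(A_k) - v_i(A_i)`. Since no round's
matching gains from reassigning its items along a cycle, every cycle has nonpositive weight; since
none gains from shifting its items along a path while the last agent takes its item of the next
round, the weight of a path telescopes over the rounds to at most the value of one item, so at
most 1. Paying every agent the weight of the longest path leaving it, minus the least such weight,
removes all envy, and only the `n - 1` other agents are paid, at most 1 each.
-/

open Finset Equiv Function

namespace EnvyFree

section Walks

variable {α : Type*} (E : α → α → ℝ)

def walkWeight : List α → ℝ
  | a :: b :: l => E a b + walkWeight (b :: l)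
  | _ => 0

@[simp] lemma walkWeight_singleton (a : α) : walkWeight E [a] = 0 := rfl

@[simp] lemma walkWeight_cons_cons (a b : α) (l : List α) :
    walkWeight E (a :: b :: l) = E a b + walkWeight E (b :: l) := rfl

lemma walkWeight_append_cons (l₁ : List α) (a : α) (l₂ : List α) :
    walkWeight E (l₁ ++ a :: l₂) = walkWeight E (l₁ ++ [a]) + walkWeight E (a :: l₂) := by
  induction l₁ with
  | nil => simp
  | cons x l ih =>
    cases l with
    | nil => simp
    | cons y l =>
      simp only [List.cons_append, walkWeight_cons_cons] at ih ⊢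
      rw [ih, add_assoc]

lemma walkWeight_concat (a : α) (l : List α) (b : α) :
    walkWeight E (a :: l ++ [b]) = walkWeight E (a :: l) + E ((a :: l).getLast (by simp)) b := by
  induction l generalizing a with
  | nil => simp
  | cons c l ih =>
    rw [List.cons_append, List.cons_append, walkWeight_cons_cons, ← List.cons_append, ih,
      List.getLast_cons_cons, walkWeight_cons_cons, add_assoc]

/-- Take longest simple paths; a path from `k` through `i` splits at `i` into a cycle and a path
from `i`. -/
theorem exists_potential (B : ℝ)
    (hcycle : ∀ a l, (a :: l).Nodup → walkWeight E (a :: l ++ [a]) ≤ 0)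
    (hpath : ∀ a l, (a :: l).Nodup → walkWeight E (a :: l) ≤ B) :
    ∃ q : α → ℝ, (∀ i, 0 ≤ q i ∧ q i ≤ B) ∧ ∀ i k, E i k + q k ≤ q i := by
  let paths (i : α) : Set ℝ := {w | ∃ l, (i :: l).Nodup ∧ walkWeight E (i :: l) = w}
  have hzero (i : α) : 0 ∈ paths i := ⟨[], by simp, rfl⟩
  have hle (i : α) : ∀ w ∈ paths i, w ≤ B := by
    rintro _ ⟨l, hl, rfl⟩
    exact hpath i l hl
  have hbdd (i : α) : BddAbove (paths i) := ⟨B, hle i⟩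
  refine ⟨fun i => sSup (paths i), fun i => ⟨le_csSup (hbdd i) (hzero i),
    csSup_le ⟨0, hzero i⟩ (hle i)⟩, fun i k => ?_⟩
  rw [← le_sub_iff_add_le']
  refine csSup_le ⟨0, hzero k⟩ ?_
  rintro _ ⟨l, hl, rfl⟩
  rw [le_sub_iff_add_le']
  by_cases hi : i ∈ k :: l
  · obtain ⟨X, Y, hXY⟩ := List.append_of_mem hi
    rw [hXY] at hl
    have hcyc : walkWeight E (i :: X ++ [i]) ≤ 0 :=
      hcycle i X ((List.nodup_middle.1 hl).sublist (by simp))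
    have hrest : walkWeight E (i :: Y) ≤ sSup (paths i) :=
      le_csSup (hbdd i) ⟨Y, hl.sublist (List.sublist_append_right _ _), rfl⟩
    calc E i k + walkWeight E (k :: l) = walkWeight E (i :: X ++ i :: Y) := by
          rw [List.cons_append, ← hXY, walkWeight_cons_cons]
      _ = walkWeight E (i :: X ++ [i]) + walkWeight E (i :: Y) :=
          walkWeight_append_cons E (i :: X) i Y
      _ ≤ sSup (paths i) := by linarith
  · exact le_csSup (hbdd i) ⟨k :: l, List.nodup_cons.2 ⟨hi, hl⟩, rfl⟩

variable [Fintype α] [DecidableEq α]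

lemma sum_apply_swap_mul (π : Perm α) {a b : α} (hab : a ≠ b) :
    ∑ x, E x ((swap a b * π) x) = ∑ x, E x (π x)
      + (E (π.symm a) b - E (π.symm a) a) + (E (π.symm b) a - E (π.symm b) b) := by
  have hpoint (y : α) : E (π.symm y) (swap a b y) = E (π.symm y) y
      + (if y = a then E (π.symm a) b - E (π.symm a) a else 0)
      + (if y = b then E (π.symm b) a - E (π.symm b) b else 0) := by
    by_cases hya : y = a
    · subst hya; simp [hab]
    by_cases hyb : y = b
    · subst hyb; simp [hya]
    simp [swap_apply_of_ne_of_ne hya hyb, hya, hyb]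
  calc ∑ x, E x ((swap a b * π) x) = ∑ x, (fun y => E (π.symm y) (swap a b y)) (π x) := by
        simp
    _ = ∑ y, E (π.symm y) (swap a b y) := Equiv.sum_comp π fun y => E (π.symm y) (swap a b y)
    _ = ∑ y, E (π.symm y) y + (E (π.symm a) b - E (π.symm a) a)
          + (E (π.symm b) a - E (π.symm b) b) := by
        simp only [hpoint, sum_add_distrib, sum_ite_eq', mem_univ, if_true]
    _ = _ := by rw [← Equiv.sum_comp π fun y => E (π.symm y) y]; simp

lemma sum_apply_formPerm (hE : ∀ x, E x x = 0) (a : α) (l : List α) (hl : (a :: l).Nodup) :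
    ∑ x, E x ((a :: l).formPerm x) = walkWeight E (a :: l ++ [a]) := by
  induction l generalizing a with
  | nil => simp [hE]
  | cons b t ih =>
    have hab : a ≠ b := fun h => (List.nodup_cons.1 hl).1 (h ▸ List.mem_cons_self)
    have hπa : (b :: t).formPerm.symm a = a := by
      rw [Equiv.symm_apply_eq, List.formPerm_apply_of_notMem (List.nodup_cons.1 hl).1]
    have hπb : (b :: t).formPerm.symm b = (b :: t).getLast (by simp) := by
      rw [Equiv.symm_apply_eq, List.formPerm_apply_getLast]
    rw [List.formPerm_cons_cons, sum_apply_swap_mul E _ hab, ih b (List.nodup_cons.1 hl).2,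
      hπa, hπb, hE, walkWeight_concat, walkWeight_concat, walkWeight_cons_cons,
      List.getLast_cons_cons]
    ring

theorem exists_potential_of_perm (B : ℝ) (hE : ∀ x, E x x = 0)
    (hcycle : ∀ σ : Perm α, ∑ x, E x (σ x) ≤ 0)
    (hpath : ∀ (σ : Perm α) ℓ, ∑ x, E x (σ x) - E ℓ (σ ℓ) ≤ B) :
    ∃ q : α → ℝ, (∀ i, 0 ≤ q i ∧ q i ≤ B) ∧ ∀ i k, E i k + q k ≤ q i := by
  refine exists_potential E B (fun a l hl => ?_) (fun a l hl => ?_)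
  · rw [← sum_apply_formPerm E hE a l hl]
    exact hcycle _
  · have := hpath (a :: l).formPerm ((a :: l).getLast (by simp))
    rw [List.formPerm_apply_getLast, sum_apply_formPerm E hE a l hl, walkWeight_concat] at this
    linarith

end Walks

section Matchings

variable {α β : Type*} (v : α → β → ℝ)

def envy (A : α → Finset β) (i k : α) : ℝ := ∑ j ∈ A k, v i j - ∑ j ∈ A i, v i j

lemma envy_union [DecidableEq β] {S T : α → Finset β} (h : ∀ i, Disjoint (S i) (T i))
    (i k : α) : envy v (fun i => S i ∪ T i) i k = envy v S i k + envy v T i k := by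
  simp only [envy, sum_union (h _)]
  ring

structure IsMatching (R : Finset β) (M : α → Finset β) : Prop where
  card_le_one : ∀ i, (M i).card ≤ 1
  subset : ∀ i, M i ⊆ R
  disjoint : Pairwise (Disjoint on M)

variable {R : Finset β} {M : α → Finset β}

lemma isMatching_empty (R : Finset β) : IsMatching R (fun _ : α => ∅) :=
  ⟨by simp, by simp, by simp [Pairwise, onFun]⟩

lemma IsMatching.comp_perm (hM : IsMatching R M) (σ : Perm α) : IsMatching R (M ∘ σ) :=
  ⟨fun _ => hM.card_le_one _, fun _ => hM.subset _, fun _ _ h => hM.disjoint (σ.injective.ne h)⟩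

lemma IsMatching.update [DecidableEq α] (hM : IsMatching R M) (ℓ : α) {S : Finset β}
    (hS : S.card ≤ 1) (hSR : S ⊆ R) (hdisj : ∀ i ≠ ℓ, Disjoint S (M i)) :
    IsMatching R (update M ℓ S) := by
  refine ⟨fun i => ?_, fun i => ?_, fun i k hik => ?_⟩
  · rw [update_apply]; split_ifs <;> simp [hS, hM.card_le_one]
  · rw [update_apply]; split_ifs <;> simp [hSR, hM.subset]
  · simp only [onFun, update_apply]
    split_ifs with hi hk hk
    · exact absurd (hi.trans hk.symm) hik
    · exact hdisj k hk
    · exact (hdisj i hi).symm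
    · exact hM.disjoint hik

variable [Fintype α]

def welfare (A : α → Finset β) : ℝ := ∑ i, ∑ j ∈ A i, v i j

lemma sum_envy_perm (A : α → Finset β) (σ : Perm α) :
    ∑ x, envy v A x (σ x) = welfare v (A ∘ σ) - welfare v A :=
  sum_sub_distrib ..

lemma welfare_update [DecidableEq α] (A : α → Finset β) (ℓ : α) (S : Finset β) :
    welfare v (update A ℓ S) = welfare v A - ∑ j ∈ A ℓ, v ℓ j + ∑ j ∈ S, v ℓ j := by
  simp only [welfare, apply_update (fun i (T : Finset β) => ∑ j ∈ T, v i j),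
    sum_update_of_mem (mem_univ ℓ), Fintype.sum_eq_add_sum_compl ℓ (fun i => ∑ j ∈ A i, v i j),
    compl_eq_univ_sdiff]
  ring

def IsMaxMatching (R : Finset β) (M : α → Finset β) : Prop :=
  IsMatching R M ∧ ∀ M', IsMatching R M' → welfare v M' ≤ welfare v M

variable {v}

lemma IsMaxMatching.sum_envy_perm_nonpos (hM : IsMaxMatching v R M) (σ : Perm α) :
    ∑ x, envy v M x (σ x) ≤ 0 := by
  rw [sum_envy_perm]
  linarith [hM.2 _ (hM.1.comp_perm σ)]

/-- Compare `M` with the matching that reassigns the items along `σ`, except that `ℓ` gets its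
item of the next round instead of the item of `σ ℓ`. -/
lemma IsMaxMatching.sum_envy_perm_sub_le [DecidableEq α] [DecidableEq β]
    (hM : IsMaxMatching v R M) {M' : α → Finset β} (hM' : IsMatching (R \ univ.biUnion M) M')
    (σ : Perm α) (ℓ : α) :
    ∑ x, envy v M x (σ x) - envy v M ℓ (σ ℓ) ≤ ∑ j ∈ M ℓ, v ℓ j - ∑ j ∈ M' ℓ, v ℓ j := by
  have hfresh (i : α) : Disjoint (M' ℓ) (M i) :=
    disjoint_of_subset_left (hM'.subset ℓ)
      (disjoint_sdiff_self_left.mono_right (subset_biUnion_of_mem M (mem_univ i)))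
  have hmatch := (hM.1.comp_perm σ).update ℓ (hM'.card_le_one ℓ)
    ((hM'.subset ℓ).trans sdiff_subset) fun i _ => hfresh (σ i)
  have hle := hM.2 _ hmatch
  rw [welfare_update] at hle
  rw [sum_envy_perm]
  simp only [envy, comp_apply] at hle ⊢
  linarith

/-- If the empty matching is optimal, so is any single pair. -/
lemma exists_isMaxMatching [DecidableEq α] [Fintype β] [Nonempty α] [DecidableEq β]
    (hv : ∀ i j, 0 ≤ v i j) (R : Finset β) :
    ∃ M : α → Finset β, IsMaxMatching v R M ∧ (R.Nonempty → (univ.biUnion M).Nonempty) := by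
  obtain ⟨M, hM, hmax⟩ := Set.exists_max_image {M : α → Finset β | IsMatching R M} (welfare v)
    (Set.toFinite _) ⟨_, isMatching_empty R⟩
  by_cases hprog : (univ.biUnion M).Nonempty
  · exact ⟨M, ⟨hM, hmax⟩, fun _ => hprog⟩
  rcases R.eq_empty_or_nonempty with rfl | ⟨j, hj⟩
  · exact ⟨M, ⟨hM, hmax⟩, fun h => absurd h not_nonempty_empty⟩
  have hempty : ∀ i, M i = ∅ := by
    simpa [biUnion_nonempty, not_nonempty_iff_eq_empty] using hprog
  let i₀ := Classical.arbitrary α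
  have hsingle := (isMatching_empty R).update i₀ (card_singleton j).le
    (singleton_subset_iff.2 hj) fun _ _ => disjoint_empty_right _
  refine ⟨_, ⟨hsingle, fun M' hM' => (hmax M' hM').trans ?_⟩, fun _ => ⟨j, ?_⟩⟩
  · rw [welfare_update]
    simp [welfare, hempty, hv]
  · exact mem_biUnion.2 ⟨i₀, mem_univ _, by simp⟩

/-- `M` is the matching of the first round. -/
theorem exists_allocation_by_rounds [DecidableEq α] [Fintype β] [Nonempty α] [DecidableEq β]
    (hv : ∀ i j, 0 ≤ v i j) (R : Finset β) :
    ∃ (A M : α → Finset β), IsMatching R M ∧ Pairwise (Disjoint on A) ∧ univ.biUnion A = R ∧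
      (∀ σ : Perm α, ∑ x, envy v A x (σ x) ≤ 0) ∧
      ∀ (σ : Perm α) ℓ, ∑ x, envy v A x (σ x) - envy v A ℓ (σ ℓ) ≤ ∑ j ∈ M ℓ, v ℓ j := by
  induction R using Finset.strongInduction with
  | H R ih =>
  rcases R.eq_empty_or_nonempty with rfl | hR
  · refine ⟨fun _ => ∅, fun _ => ∅, isMatching_empty ∅, ?_, by ext; simp, ?_, ?_⟩ <;>
      simp [Pairwise, onFun, envy]
  obtain ⟨M, hM, hprog⟩ := exists_isMaxMatching hv R
  obtain ⟨A', M', hM', hdisj', hcover', hcycle', hpath'⟩ :=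
    ih _ (sdiff_ssubset (biUnion_subset.2 fun i _ => hM.1.subset i) (hprog hR))
  have hsep (i k : α) : Disjoint (M i) (A' k) :=
    disjoint_of_subset_right (hcover' ▸ subset_biUnion_of_mem A' (mem_univ k))
      (disjoint_sdiff.mono_left (subset_biUnion_of_mem M (mem_univ i)))
  have henvy (σ : Perm α) : ∑ x, envy v (fun i => M i ∪ A' i) x (σ x)
      = ∑ x, envy v M x (σ x) + ∑ x, envy v A' x (σ x) := by
    simp only [envy_union v (fun i => hsep i i), sum_add_distrib]
  refine ⟨fun i => M i ∪ A' i, M, hM.1, fun i k hik => ?_, ?_, fun σ => ?_, fun σ ℓ => ?_⟩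
  · simp only [onFun, disjoint_union_left, disjoint_union_right]
    exact ⟨⟨hM.1.disjoint hik, (hsep k i).symm⟩, hsep i k, hdisj' hik⟩
  · rw [biUnion_union, hcover', union_sdiff_of_subset (biUnion_subset.2 fun i _ => hM.1.subset i)]
  · linarith [henvy σ, hM.sum_envy_perm_nonpos σ, hcycle' σ]
  · rw [henvy, envy_union v (fun i => hsep i i)]
    linarith [hM.sum_envy_perm_sub_le hM' σ ℓ, hpath' σ ℓ]

end Matchings

lemma sum_sub_apply_le_card_sub_one {ι : Type*} [Fintype ι] [DecidableEq ι] (q : ι → ℝ) (i₀ : ι)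
    (h : ∀ i, q i - q i₀ ≤ 1) : ∑ i, (q i - q i₀) ≤ Fintype.card ι - 1 := by
  rw [← add_sum_erase _ _ (mem_univ i₀), sub_self, zero_add]
  calc ∑ i ∈ univ.erase i₀, (q i - q i₀) ≤ ∑ i ∈ univ.erase i₀, (1 : ℝ) :=
        sum_le_sum fun i _ => h i
    _ = Fintype.card ι - 1 := by
        rw [sum_const, card_erase_of_mem (mem_univ i₀), nsmul_one, card_univ,
          Nat.cast_sub (Fintype.card_pos_iff.2 ⟨i₀⟩)]
        simp

end EnvyFree

/-- For n ≥ 1 agents with additive valuations whose item values lie in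
[0,1], there exists an allocation A and a payment vector p such that (A, p) is
envy-free and the total subsidy is at most n − 1. -/
theorem total_subsidy_at_most_n_sub_one
    (n m : ℕ) (hn : 1 ≤ n)
    (v : Fin n → Fin m → ℝ)
    (hv0 : ∀ i j, 0 ≤ v i j) (hv1 : ∀ i j, v i j ≤ 1) :
    ∃ (A : Fin n → Finset (Fin m)) (p : Fin n → ℝ),
      (∀ i k, i ≠ k → Disjoint (A i) (A k)) ∧
      (Finset.univ.biUnion A = Finset.univ) ∧
      (∀ i, 0 ≤ p i) ∧
      (∀ i k : Fin n, (∑ j ∈ A i, v i j) + p i ≥ (∑ j ∈ A k, v i j) + p k) ∧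
      (∑ i, p i) ≤ (n : ℝ) - 1 := by
  have : Nonempty (Fin n) := ⟨⟨0, hn⟩⟩
  obtain ⟨A, M, hM, hdisj, hcover, hcycle, hpath⟩ := EnvyFree.exists_allocation_by_rounds hv0 univ
  have hitem (ℓ : Fin n) : ∑ j ∈ M ℓ, v ℓ j ≤ 1 :=
    (sum_le_card_nsmul _ _ 1 fun j _ => hv1 ℓ j).trans (by simpa using hM.card_le_one ℓ)
  obtain ⟨q, hq, hpot⟩ := EnvyFree.exists_potential_of_perm (EnvyFree.envy v A) 1
    (fun _ => sub_self _) hcycle fun σ ℓ => (hpath σ ℓ).trans (hitem ℓ)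
  obtain ⟨i₀, -, hmin⟩ := exists_min_image univ q univ_nonempty
  refine ⟨A, fun i => q i - q i₀, fun i k hik => hdisj hik, hcover,
    fun i => sub_nonneg.2 (hmin i (mem_univ i)), fun i k => ?_, ?_⟩
  · have := hpot i k
    simp only [EnvyFree.envy] at this
    linarith
  · simpa using EnvyFree.sum_sub_apply_le_card_sub_one q i₀ fun i => by linarith [hq i, hq i₀]
end

section
/- For n ≥ 1 agents with monotone valuations whose marginal values are at most 1, there exists an allocation A and a payment vector p such that the pair (A, p) is envy-free and p i ≤ 2(n − 1) for every agent i. -/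
/-!
Envy-cycle elimination produces an allocation `A` in which every agent values every other bundle
at most one more than her own. Reassign the bundles of `A` by a welfare-maximising permutation,
giving `B`. The envy graph of `B`, with edge weights `v i (B k) - v i (B i)`, then has no
positive cycle, so paying every agent the maximum weight of a simple walk starting at her makes
`B` envy-free. An edge leaving `i` weighs at most `1 + δ i`, where `δ i` is what `i` lost in the
reassignment. Welfare did not decrease, so the total loss is at most the total gain; nobody
gains more than `1` and a loser gains nothing, so both are at most `n - 1`. A simple walk has at
most `n - 1` edges, with distinct sources, hence weight at most `2 (n - 1)`.
-/

open Finset Function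

namespace Subsidy

variable {ι α : Type*}

section Walks

variable (E : ι → ι → ℝ)

def walkWeight (l : List ι) : ℝ := (List.zipWith E l l.tail).sum

@[simp] lemma walkWeight_nil : walkWeight E [] = 0 := rfl

@[simp] lemma walkWeight_singleton (a : ι) : walkWeight E [a] = 0 := rfl

@[simp] lemma walkWeight_cons_cons (a b : ι) (l : List ι) :
    walkWeight E (a :: b :: l) = E a b + walkWeight E (b :: l) := by
  simp [walkWeight]

lemma walkWeight_append_cons (a : ι) (ys : List ι) :
    ∀ xs : List ι,
      walkWeight E (xs ++ a :: ys) = walkWeight E (xs ++ [a]) + walkWeight E (a :: ys)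
  | [] => by simp
  | [x] => by simp
  | x :: y :: xs => by
    simp only [List.cons_append, walkWeight_cons_cons] at *
    rw [← List.cons_append, walkWeight_append_cons a ys (y :: xs), List.cons_append]
    ring

lemma map_formPerm_eq_rotate_one [DecidableEq ι] {l : List ι} (hl : l.Nodup) :
    l.map l.formPerm = l.rotate 1 := by
  refine List.ext_getElem (by simp) fun k hk _ => ?_
  rw [List.getElem_map, List.getElem_rotate, List.formPerm_apply_getElem _ hl]

lemma walkWeight_cycle_eq_sum_formPerm [DecidableEq ι] {a : ι} {t : List ι}
    (h : (a :: t).Nodup) :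
    walkWeight E (a :: t ++ [a]) = ∑ x ∈ (a :: t).toFinset, E x ((a :: t).formPerm x) := by
  have hzip : (a :: t).map (fun x => E x ((a :: t).formPerm x)) =
      List.zipWith E (a :: t) ((a :: t).map (a :: t).formPerm) := by
    rw [List.zipWith_map_right, List.zipWith_self]
  rw [List.sum_toFinset _ h, hzip, map_formPerm_eq_rotate_one h, List.rotate_cons_succ,
    List.rotate_zero, walkWeight, List.cons_append, List.tail_cons, ← List.cons_append,
    ← List.append_nil (t ++ [a]), List.zipWith_append (by simp)]
  simp

lemma walkWeight_cycle_nonpos [Fintype ι] (W : ι → ι → ℝ)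
    (hW : ∀ τ : Equiv.Perm ι, ∑ i, W i (τ i) ≤ ∑ i, W i i) {a : ι} {t : List ι}
    (h : (a :: t).Nodup) : walkWeight (fun i k => W i k - W i i) (a :: t ++ [a]) ≤ 0 := by
  classical
  have hsupp : ∀ x ∉ (a :: t).toFinset, W x ((a :: t).formPerm x) - W x x = 0 := fun x hx => by
    rw [List.formPerm_apply_of_notMem (by simpa using hx), sub_self]
  rw [walkWeight_cycle_eq_sum_formPerm _ h, sum_subset (subset_univ _) fun x _ hx => hsupp x hx,
    sum_sub_distrib, sub_nonpos]
  exact hW _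

lemma walkWeight_le_length_add_sum [DecidableEq ι] {δ : ι → ℝ} (hδ : ∀ i, 0 ≤ δ i)
    (hE : ∀ i k, E i k ≤ 1 + δ i) :
    ∀ {a : ι} {t : List ι}, (a :: t).Nodup →
      walkWeight E (a :: t) ≤ t.length + ∑ x ∈ (a :: t).toFinset, δ x
  | a, [], _ => by simpa using hδ a
  | a, b :: t, h => by
    have ih := walkWeight_le_length_add_sum hδ hE h.of_cons
    rw [List.toFinset_cons, sum_insert (by simpa using h.notMem), walkWeight_cons_cons,
      List.length_cons, Nat.cast_succ]
    linarith [hE a b]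

lemma exists_max_simple_walk [Fintype ι] (i : ι) :
    ∃ t : List ι, (i :: t).Nodup ∧
      ∀ s : List ι, (i :: s).Nodup → walkWeight E (i :: s) ≤ walkWeight E (i :: t) := by
  have : Finite {t : List ι // (i :: t).Nodup} :=
    .of_injective (fun t => (⟨i :: t.1, t.2⟩ : {l : List ι // l.Nodup}))
      fun _ _ h => Subtype.ext (List.cons_injective (congrArg Subtype.val h))
  have : Nonempty {t : List ι // (i :: t).Nodup} := ⟨⟨[], by simp⟩⟩
  obtain ⟨⟨t, ht⟩, hmax⟩ :=
    Finite.exists_max fun t : {t // (i :: t).Nodup} => walkWeight E (i :: t)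
  exact ⟨t, ht, fun s hs => hmax ⟨s, hs⟩⟩

lemma add_walkWeight_le_of_cycle_nonpos
    (hcyc : ∀ (a : ι) (c : List ι), (a :: c).Nodup → walkWeight E (a :: c ++ [a]) ≤ 0)
    {i : ι} {t : List ι}
    (ht : ∀ s : List ι, (i :: s).Nodup → walkWeight E (i :: s) ≤ walkWeight E (i :: t))
    {k : ι} {s : List ι} (hs : (k :: s).Nodup) :
    E i k + walkWeight E (k :: s) ≤ walkWeight E (i :: t) := by
  rw [← walkWeight_cons_cons]
  by_cases hi : i ∈ k :: s
  · obtain ⟨c, r, hcr⟩ := List.append_of_mem hi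
    rw [hcr] at hs ⊢
    obtain ⟨hc, hir, hdisj⟩ := List.nodup_append.mp hs
    have hic : (i :: c).Nodup := List.nodup_cons.mpr ⟨fun h => hdisj i h i (by simp) rfl, hc⟩
    rw [← List.cons_append, walkWeight_append_cons]
    linarith [hcyc i c hic, ht r hir]
  · exact ht _ (List.nodup_cons.mpr ⟨hi, hs⟩)

end Walks

theorem exists_payments [Fintype ι] (W : ι → ι → ℝ)
    (hW : ∀ τ : Equiv.Perm ι, ∑ i, W i (τ i) ≤ ∑ i, W i i) {δ : ι → ℝ} (hδ : ∀ i, 0 ≤ δ i)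
    (hWδ : ∀ i k, W i k ≤ W i i + 1 + δ i) :
    ∃ p : ι → ℝ, (∀ i, 0 ≤ p i) ∧ (∀ i k, W i k + p k ≤ W i i + p i) ∧
      ∀ i, p i ≤ (Fintype.card ι - 1) + ∑ i, δ i := by
  classical
  set E : ι → ι → ℝ := fun i k => W i k - W i i
  choose t ht hmax using exists_max_simple_walk E
  refine ⟨fun i => walkWeight E (i :: t i), fun i => by simpa using hmax i [] (by simp),
    fun i k => ?_, fun i => ?_⟩
  · have := add_walkWeight_le_of_cycle_nonpos E (fun _ _ => walkWeight_cycle_nonpos W hW)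
      (hmax i) (ht k)
    simp only [E] at this ⊢
    linarith
  · have hwalk := walkWeight_le_length_add_sum E hδ
      (fun i k => by simp only [E]; linarith [hWδ i k]) (ht i)
    have hlen : ((t i).length : ℝ) ≤ Fintype.card ι - 1 := by
      rw [le_sub_iff_add_le]
      exact_mod_cast (ht i).length_le_card
    have hδsum : ∑ x ∈ (i :: t i).toFinset, δ x ≤ ∑ x, δ x :=
      sum_le_sum_of_subset_of_nonneg (subset_univ _) fun x _ _ => hδ x
    linarith

section Allocations

variable [Fintype ι] [DecidableEq α]

def IsAllocation (S : Finset α) (A : ι → Finset α) : Prop :=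
  Pairwise (Disjoint on A) ∧ univ.biUnion A = S

lemma isAllocation_empty : IsAllocation (∅ : Finset α) (fun _ : ι => ∅) :=
  ⟨fun _ _ _ => disjoint_bot_left, by ext; simp⟩

lemma IsAllocation.comp_perm {S : Finset α} {A : ι → Finset α} (h : IsAllocation S A)
    (σ : Equiv.Perm ι) : IsAllocation S (A ∘ σ) := by
  refine ⟨fun i k hik => h.1 (σ.injective.ne hik), ?_⟩
  rw [← h.2]
  ext x
  simpa using (σ.surjective.exists (p := fun i => x ∈ A i)).symm

lemma biUnion_update_insert [DecidableEq ι] (A : ι → Finset α) (u : ι) (j : α) :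
    univ.biUnion (update A u (insert j (A u))) = insert j (univ.biUnion A) := by
  refine Subset.antisymm (biUnion_subset.mpr fun i _ => ?_)
    (insert_subset (mem_biUnion.mpr ⟨u, mem_univ _, by simp⟩) (biUnion_mono fun i _ => ?_))
  · rcases eq_or_ne i u with rfl | hi
    · simpa using insert_subset_insert j (subset_biUnion_of_mem A (mem_univ i))
    · simpa [hi] using (subset_biUnion_of_mem A (mem_univ i)).trans (subset_insert j _)
  · rcases eq_or_ne i u with rfl | hi <;> simp [*, subset_insert]

lemma IsAllocation.update_insert [DecidableEq ι] {S : Finset α} {A : ι → Finset α}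
    (h : IsAllocation S A) {j : α} (hj : j ∉ S) (u : ι) :
    IsAllocation (insert j S) (update A u (insert j (A u))) := by
  have hjA : ∀ i, j ∉ A i := fun i hji => hj (h.2 ▸ mem_biUnion.mpr ⟨i, mem_univ _, hji⟩)
  refine ⟨fun i k hik => ?_, h.2 ▸ biUnion_update_insert A u j⟩
  simp only [onFun, update_apply]
  split_ifs with hi hk hk
  · exact absurd (hi.trans hk.symm) hik
  · exact disjoint_insert_left.mpr ⟨hjA k, h.1 (hi ▸ hik)⟩
  · exact disjoint_insert_right.mpr ⟨hjA i, h.1 (hk ▸ hik)⟩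
  · exact h.1 hik

end Allocations

lemma exists_perm_of_forall_exists_rel [Finite ι] [Nonempty ι] {r : ι → ι → Prop}
    (h : ∀ u, ∃ i, r i u) : ∃ ρ : Equiv.Perm ι, (∀ i, ρ i = i ∨ r i (ρ i)) ∧ ∃ i, r i (ρ i) := by
  classical
  choose f hf using h
  set P := periodicPts f
  obtain ⟨x₀, hx₀⟩ : P.Nonempty := by
    obtain ⟨x⟩ := ‹Nonempty ι›
    obtain ⟨m, n, heq, hne⟩ : ∃ m n, f^[m] x = f^[n] x ∧ m ≠ n := by
      simpa [Injective] using not_injective_infinite_finite (f^[·] x)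
    wlog hmn : m < n generalizing m n
    · exact this n m heq.symm hne.symm (by omega)
    refine ⟨f^[m] x, mk_mem_periodicPts (n := n - m) (by omega) ?_⟩
    rw [IsPeriodicPt, IsFixedPt, ← iterate_add_apply, Nat.sub_add_cancel hmn.le, heq]
  -- `f` permutes its periodic points; `σ` is this permutation extended by the identity.
  set σ := Equiv.Perm.ofSubtype ((bijOn_periodicPts f).equiv f)
  have hσP : ∀ y ∈ P, σ y = f y := fun y hy => Equiv.Perm.ofSubtype_apply_of_mem _ hy
  refine ⟨σ.symm, fun i => ?_, f x₀, ?_⟩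
  · by_cases hy : σ.symm i ∈ P
    · right
      convert hf (σ.symm i)
      rw [← hσP _ hy, Equiv.apply_symm_apply]
    · left
      conv_rhs => rw [← σ.apply_symm_apply i]
      exact (Equiv.Perm.ofSubtype_apply_of_not_mem _ hy).symm
  · rw [← hσP _ hx₀, Equiv.symm_apply_apply, hσP _ hx₀]
    exact hf x₀

section EnvyCycles

variable [Fintype ι] [Nonempty ι] (v : ι → Finset α → ℝ)

lemma exists_perm_envy_le_one_unenvied {A : ι → Finset α}
    (hA : ∀ i k, v i (A k) ≤ v i (A i) + 1) :
    ∃ π : Equiv.Perm ι, (∀ i k, v i (A (π k)) ≤ v i (A (π i)) + 1) ∧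
      ∃ u, ∀ i, v i (A (π u)) ≤ v i (A (π i)) := by
  classical
  set envyLeOne := univ.filter fun π : Equiv.Perm ι => ∀ i k, v i (A (π k)) ≤ v i (A (π i)) + 1
  obtain ⟨π, hπ, hmax⟩ := envyLeOne.exists_max_image (fun π => ∑ i, v i (A (π i)))
    ⟨1, by simpa [envyLeOne] using hA⟩
  rw [mem_filter] at hπ
  refine ⟨π, hπ.2, ?_⟩
  by_contra! henvied
  obtain ⟨ρ, hρ, i₀, hi₀⟩ := exists_perm_of_forall_exists_rel henvied
  have hgain : ∀ i, v i (A (π i)) ≤ v i (A (π (ρ i))) := fun i =>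
    (hρ i).elim (fun h => by rw [h]) le_of_lt
  have hρπ : ρ.trans π ∈ envyLeOne := by
    simp only [envyLeOne, mem_filter, mem_univ, true_and, Equiv.trans_apply]
    exact fun i k => (hπ.2 i (ρ k)).trans (by linarith [hgain i])
  have hlt : ∑ i, v i (A (π i)) < ∑ i, v i (A (π (ρ i))) :=
    sum_lt_sum (fun i _ => hgain i) ⟨i₀, mem_univ _, hi₀⟩
  exact (hmax _ hρπ).not_gt hlt

lemma exists_allocation_envy_le_one [DecidableEq α]
    (hmono : ∀ i (S T : Finset α), S ⊆ T → v i S ≤ v i T)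
    (hmarg : ∀ i (S : Finset α) (j : α), j ∉ S → v i (insert j S) ≤ v i S + 1)
    (S : Finset α) :
    ∃ A : ι → Finset α, IsAllocation S A ∧ ∀ i k, v i (A k) ≤ v i (A i) + 1 := by
  classical
  induction S using Finset.induction_on with
  | empty => exact ⟨fun _ => ∅, isAllocation_empty, fun _ _ => by simp⟩
  | insert j S hj ih =>
    obtain ⟨A, hA, hA1⟩ := ih
    obtain ⟨π, hπ1, u, hu⟩ := exists_perm_envy_le_one_unenvied v hA1
    have hB := hA.comp_perm π
    have hjB : ∀ i, j ∉ A (π i) := fun i hji =>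
      hj (hB.2 ▸ mem_biUnion.mpr ⟨i, mem_univ _, hji⟩)
    refine ⟨update (A ∘ π) u (insert j (A (π u))), hB.update_insert hj u, fun i k => ?_⟩
    have hgrow : v i (A (π i)) ≤ v i (update (A ∘ π) u (insert j (A (π u))) i) := by
      refine hmono _ _ _ ?_
      rcases eq_or_ne i u with rfl | hi
      · simp
      · simp [update_of_ne hi]
    rcases eq_or_ne k u with rfl | hk
    · rw [update_self]
      linarith [hmarg i _ j (hjB k), hu i]
    · rw [update_of_ne hk, comp_apply]
      linarith [hπ1 i k]

end EnvyCycles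

lemma sum_max_sub_le_card_sub_one [Fintype ι] [Nonempty ι] {a b : ι → ℝ}
    (hba : ∀ i, b i ≤ a i + 1) (hsum : ∑ i, a i ≤ ∑ i, b i) :
    ∑ i, max (a i - b i) 0 ≤ Fintype.card ι - 1 := by
  classical
  by_cases hgain : ∀ i, a i ≤ b i
  · have hcard : (1 : ℝ) ≤ Fintype.card ι := by exact_mod_cast Fintype.card_pos
    simpa [fun i => max_eq_right (sub_nonpos.mpr (hgain i))] using hcard
  obtain ⟨i₀, hi₀⟩ := not_forall.mp hgain
  rw [not_le] at hi₀
  have hsplit : ∀ i, max (a i - b i) 0 = max (b i - a i) 0 + (a i - b i) := fun i => by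
    rcases le_total (a i) (b i) with h | h
    · rw [max_eq_right (by linarith), max_eq_left (by linarith)]; ring
    · rw [max_eq_left (by linarith), max_eq_right (by linarith)]; ring
  calc ∑ i, max (a i - b i) 0
      = ∑ i, max (b i - a i) 0 + (∑ i, a i - ∑ i, b i) := by
        rw [sum_congr rfl fun i _ => hsplit i, sum_add_distrib, sum_sub_distrib]
    _ ≤ ∑ i ∈ univ.erase i₀, max (b i - a i) 0 := by
        rw [← sum_erase_add _ _ (mem_univ i₀), max_eq_right (by linarith)]
        linarith
    _ ≤ ∑ i ∈ univ.erase i₀, 1 :=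
        sum_le_sum fun i _ => max_le (by linarith [hba i]) zero_le_one
    _ = Fintype.card ι - 1 := by
        rw [sum_const, card_erase_of_mem (mem_univ _), card_univ, nsmul_one,
          Nat.cast_sub Fintype.card_pos, Nat.cast_one]

end Subsidy

open Subsidy Finset in
theorem monotone_subsidy_two_n_sub_one_each_general
    (n m : ℕ) (hn : 1 ≤ n)
    (v : Fin n → Finset (Fin m) → ℝ)
    (hmono : ∀ i (S T : Finset (Fin m)), S ⊆ T → v i S ≤ v i T)
    (hmarg : ∀ i (S : Finset (Fin m)) (j : Fin m), j ∉ S → v i (insert j S) ≤ v i S + 1) :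
    ∃ (A : Fin n → Finset (Fin m)) (p : Fin n → ℝ),
      (∀ i k, i ≠ k → Disjoint (A i) (A k)) ∧
      (Finset.univ.biUnion A = Finset.univ) ∧
      (∀ i, 0 ≤ p i) ∧
      (∀ i k : Fin n, v i (A i) + p i ≥ v i (A k) + p k) ∧
      (∀ i, p i ≤ 2 * ((n : ℝ) - 1)) := by
  have : Nonempty (Fin n) := ⟨⟨0, hn⟩⟩
  obtain ⟨A, hA, hA1⟩ := exists_allocation_envy_le_one v hmono hmarg univ
  obtain ⟨σ, hσ⟩ := Finite.exists_max fun σ : Equiv.Perm (Fin n) => ∑ i, v i (A (σ i))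
  have hloss : ∑ i, max (v i (A i) - v i (A (σ i))) 0 ≤ n - 1 := by
    simpa using sum_max_sub_le_card_sub_one (fun i => hA1 i (σ i)) (by simpa using hσ 1)
  obtain ⟨p, hp0, hpEF, hp⟩ := exists_payments (fun i k => v i (A (σ k)))
    (fun τ => hσ (τ.trans σ)) (fun i => le_max_right _ 0)
    (fun i k => by linarith [hA1 i (σ k), le_max_left (v i (A i) - v i (A (σ i))) 0])
  refine ⟨A ∘ σ, p, fun i k hik => (hA.comp_perm σ).1 hik, (hA.comp_perm σ).2, hp0,
    fun i k => hpEF i k, fun i => ?_⟩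
  have := hp i
  rw [Fintype.card_fin] at this
  linarith

/-- For n ≥ 1 agents with monotone valuations whose marginal values are
at most 1, there exists an allocation A and a payment vector p such that (A, p) is
envy-free and p i ≤ 2(n − 1) for every agent i. -/
theorem monotone_subsidy_two_n_sub_one_each
    (n m : ℕ) (hn : 1 ≤ n)
    (v : Fin n → Finset (Fin m) → ℝ)
    (hv0 : ∀ i, v i ∅ = 0)
    (hmono : ∀ i (S T : Finset (Fin m)), S ⊆ T → v i S ≤ v i T)
    (hmarg : ∀ i (S : Finset (Fin m)) (j : Fin m), j ∉ S → v i (insert j S) ≤ v i S + 1) :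
    ∃ (A : Fin n → Finset (Fin m)) (p : Fin n → ℝ),
      (∀ i k, i ≠ k → Disjoint (A i) (A k)) ∧
      (Finset.univ.biUnion A = Finset.univ) ∧
      (∀ i, 0 ≤ p i) ∧
      (∀ i k : Fin n, v i (A i) + p i ≥ v i (A k) + p k) ∧
      (∀ i, p i ≤ 2 * ((n : ℝ) - 1)) :=
  monotone_subsidy_two_n_sub_one_each_general n m hn v hmono hmarg
end

section
/- If an allocation A is envy-freeable, then A maximizes utilitarian welfare across all reassignments of its bundles to agents: for every permutation π of Fin n, ∑_{i} v_i(A_{π(i)}) ≤ ∑_{i} v_i(A_i). -/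
/-- If an allocation A is envy-freeable, then A maximizes utilitarian
welfare across all reassignments of its bundles to agents. -/
theorem envy_freeable_maximizes_welfare
    (n m : ℕ) (hn : 1 ≤ n)
    (v : Fin n → Finset (Fin m) → ℝ)
    (A : Fin n → Finset (Fin m))
    (hdisj : ∀ i k, i ≠ k → Disjoint (A i) (A k))
    (hcover : Finset.univ.biUnion A = Finset.univ)
    (hef : ∃ p : Fin n → ℝ, (∀ i, 0 ≤ p i) ∧
      ∀ i k : Fin n, v i (A i) + p i ≥ v i (A k) + p k) :
    ∀ π : Equiv.Perm (Fin n), (∑ i, v i (A (π i))) ≤ ∑ i, v i (A i) := by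
  obtain ⟨p, _, hp⟩ := hef
  intro π
  have h : ∑ i, (v i (A (π i)) + p (π i)) ≤ ∑ i, (v i (A i) + p i) :=
    Finset.sum_le_sum fun i _ => hp i (π i)
  have hperm : ∑ i, p (π i) = ∑ i, p i :=
    Equiv.sum_comp π p
  simp only [Finset.sum_add_distrib, hperm] at h
  linarith
end

section
/- If an allocation A maximizes utilitarian welfare across all reassignments of its bundles, i.e. for every permutation π of Fin n one has ∑_{i} v_i(A_{π(i)}) ≤ ∑_{i} v_i(A_i), then every directed cycle in the envy graph of A has weight at most 0. -/
/-- If an allocation A maximizes utilitarian welfare across all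
reassignments of its bundles, then every directed cycle in the envy graph of A
(a cycle on r ≥ 2 pairwise distinct agents, here encoded with r = r' + 2 and
addition wrapping around in `Fin (r' + 2)`) has weight at most 0. -/
theorem welfare_maximizing_no_positive_cycle
    (n m : ℕ) (hn : 1 ≤ n)
    (v : Fin n → Finset (Fin m) → ℝ)
    (A : Fin n → Finset (Fin m))
    (hdisj : ∀ i k, i ≠ k → Disjoint (A i) (A k))
    (hcover : Finset.univ.biUnion A = Finset.univ)
    (hmax : ∀ π : Equiv.Perm (Fin n), (∑ i, v i (A (π i))) ≤ ∑ i, v i (A i)) :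
    ∀ (r : ℕ) (c : Fin (r + 2) → Fin n), Function.Injective c →
      (∑ t : Fin (r + 2), (v (c t) (A (c (t + 1))) - v (c t) (A (c t)))) ≤ 0 := by
  intro r c hc
  set ι : Fin (r + 2) ↪ Fin n := ⟨c, hc⟩ with hι
  set π : Equiv.Perm (Fin n) := (Equiv.addRight (1 : Fin (r + 2))).viaEmbedding ι with hπ
  have h := hmax π
  have key : (∑ t : Fin (r + 2), (v (c t) (A (c (t + 1))) - v (c t) (A (c t))))
      = ∑ i, (v i (A (π i)) - v i (A i)) := by
    rw [← Finset.sum_subset (Finset.subset_univ (Finset.univ.image c))]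
    · rw [Finset.sum_image (fun a _ b _ h => hc h)]
      refine Finset.sum_congr rfl fun t _ => ?_
      have hπc : π (c t) = c (t + 1) := by
        have := Equiv.Perm.viaEmbedding_apply (Equiv.addRight (1 : Fin (r + 2))) ι t
        simpa [ι] using this
      rw [hπc]
    · intro i _ hi
      have hnr : i ∉ Set.range ι := by
        simp only [Finset.mem_image, Finset.mem_univ, true_and] at hi
        simpa [ι, Set.range] using hi
      have : π i = i := Equiv.Perm.viaEmbedding_apply_of_notMem _ ι i hnr
      simp [this]
  rw [key, Finset.sum_sub_distrib]
  linarith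
end

section
/- If every directed cycle in the envy graph of an allocation A has weight at most 0, then setting p i equal to the maximum weight of a directed path starting at agent i in the envy graph (with paths of at most one vertex having weight 0) yields p i ≥ 0 for all i and the pair (A, p) is envy-free; in particular A is envy-freeable. -/
/-! The one-vertex path makes `p i ≥ 0`. For envy-freeness, `p i ≥ w(i,k) + p k` is what is
needed: prepend `i` to a heaviest path from `k`. If that path already visits `i`, cut it there
instead: its part from `k` to `i` together with the arc `i → k` is a cycle, of weight at most
`0`, and its part from `i` on is a path from `i`, of weight at most `p i`. -/

/-- The weight of a directed path, given as a list of agents: the sum of the weights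
of its consecutive arcs (a list with at most one vertex has weight 0). -/
def pathWeight {n : ℕ} (w : Fin n → Fin n → ℝ) (l : List (Fin n)) : ℝ :=
  ((l.zip l.tail).map fun q => w q.1 q.2).sum

def CycleWeightsNonpos {n : ℕ} (w : Fin n → Fin n → ℝ) : Prop :=
  ∀ (r : ℕ) (c : Fin (r + 2) → Fin n), Function.Injective c →
    ∑ t : Fin (r + 2), w (c t) (c (t + 1)) ≤ 0

namespace pathWeight

variable {n : ℕ} (w : Fin n → Fin n → ℝ)

@[simp] lemma singleton (a : Fin n) : pathWeight w [a] = 0 := rfl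

@[simp] lemma cons_cons (a b : Fin n) (l : List (Fin n)) :
    pathWeight w (a :: b :: l) = w a b + pathWeight w (b :: l) := by
  simp [pathWeight]

lemma append_cons (l₁ : List (Fin n)) (x : Fin n) (l₂ : List (Fin n)) :
    pathWeight w (l₁ ++ x :: l₂) = pathWeight w (l₁ ++ [x]) + pathWeight w (x :: l₂) := by
  induction l₁ with
  | nil => simp
  | cons a t ih =>
    cases t with
    | nil => simp
    | cons b t => simp only [List.cons_append] at ih ⊢; rw [cons_cons, cons_cons, ih]; ring

lemma ofFn {k : ℕ} (c : Fin (k + 1) → Fin n) :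
    pathWeight w (List.ofFn c) = ∑ j : Fin k, w (c j.castSucc) (c j.succ) := by
  induction k with
  | zero => simp
  | succ k ih =>
    rw [List.ofFn_succ, List.ofFn_succ, cons_cons, ← List.ofFn_succ (f := fun j => c j.succ),
      ih fun j => c j.succ, Fin.sum_univ_succ]
    simp only [Fin.castSucc_zero, Fin.succ_castSucc]

lemma ofFn_add_closing_arc {r : ℕ} (c : Fin (r + 2) → Fin n) :
    pathWeight w (List.ofFn c) + w (c (Fin.last (r + 1))) (c 0) =
      ∑ t : Fin (r + 2), w (c t) (c (t + 1)) := by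
  rw [Fin.sum_univ_castSucc, ofFn, Fin.last_add_one]
  simp only [Fin.coeSucc_eq_succ]

lemma add_closing_arc_nonpos
    (hcyc : CycleWeightsNonpos w)
    {a b : Fin n} {l : List (Fin n)} (hnd : (a :: l ++ [b]).Nodup) :
    pathWeight w (a :: l ++ [b]) + w b a ≤ 0 := by
  set L := a :: l ++ [b]
  have hlen : L.length = l.length + 2 := by simp [L]
  set c : Fin (l.length + 2) → Fin n := fun t => L.get (Fin.cast hlen.symm t)
  have hL : List.ofFn c = L := (List.ofFn_congr hlen L.get).symm.trans (List.ofFn_get L)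
  have hc_last : c (Fin.last _) = b := by simp [c, L]
  have hc_zero : c 0 = a := by simp [c, L]
  have hinj : Function.Injective c :=
    hnd.injective_get.comp (Fin.cast_injective hlen.symm)
  rw [← hL, ← hc_last, ← hc_zero, ofFn_add_closing_arc]
  exact hcyc _ c hinj

end pathWeight

section HeaviestPath

variable {n : ℕ} (w : Fin n → Fin n → ℝ)

def pathWeightsFrom (i : Fin n) : Set ℝ :=
  {x | ∃ l : List (Fin n), l.Nodup ∧ l.head? = some i ∧ pathWeight w l = x}

variable {w}

lemma nonneg_of_isGreatest_pathWeightsFrom {i : Fin n} {x : ℝ}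
    (hx : IsGreatest (pathWeightsFrom w i) x) : 0 ≤ x :=
  hx.2 ⟨[i], List.nodup_singleton i, rfl, pathWeight.singleton w i⟩

lemma add_le_of_isGreatest_pathWeightsFrom
    {i k : Fin n} {pi pk : ℝ} (hpi : IsGreatest (pathWeightsFrom w i) pi)
    (hpk : IsGreatest (pathWeightsFrom w k) pk) (hcyc : CycleWeightsNonpos w) (hik : i ≠ k) :
    w i k + pk ≤ pi := by
  obtain ⟨l, hnd, hhead, rfl⟩ := hpk.1
  obtain ⟨tl, rfl⟩ : ∃ tl, l = k :: tl := List.head?_eq_some_iff.mp hhead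
  by_cases hmem : i ∈ tl
  · obtain ⟨t₁, t₂, rfl⟩ := List.append_of_mem hmem
    have hcycle : pathWeight w (k :: t₁ ++ [i]) + w i k ≤ 0 :=
      pathWeight.add_closing_arc_nonpos w hcyc (hnd.sublist (by simp))
    have htail : pathWeight w (i :: t₂) ≤ pi := hpi.2 ⟨i :: t₂, hnd.sublist (by simp), rfl, rfl⟩
    have hsplit := pathWeight.append_cons w (k :: t₁) i t₂
    rw [List.cons_append] at hsplit
    linarith
  · have hext : (i :: k :: tl).Nodup := List.nodup_cons.mpr ⟨by simp [hik, hmem], hnd⟩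
    simpa using hpi.2 ⟨i :: k :: tl, hext, rfl, rfl⟩

end HeaviestPath

theorem heaviest_path_payments_envy_free_general
    (n m : ℕ)
    (v : Fin n → Finset (Fin m) → ℝ)
    (A : Fin n → Finset (Fin m))
    (hcyc : ∀ (r : ℕ) (c : Fin (r + 2) → Fin n), Function.Injective c →
      (∑ t : Fin (r + 2), (v (c t) (A (c (t + 1))) - v (c t) (A (c t)))) ≤ 0)
    (p : Fin n → ℝ)
    (hp : ∀ i : Fin n, IsGreatest
      {x : ℝ | ∃ l : List (Fin n), l.Nodup ∧ l.head? = some i ∧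
        pathWeight (fun a b => v a (A b) - v a (A a)) l = x} (p i)) :
    (∀ i, 0 ≤ p i) ∧ (∀ i k : Fin n, v i (A i) + p i ≥ v i (A k) + p k) := by
  refine ⟨fun i => nonneg_of_isGreatest_pathWeightsFrom (hp i), fun i k => ?_⟩
  rcases eq_or_ne i k with rfl | hik
  · exact le_rfl
  · have := add_le_of_isGreatest_pathWeightsFrom (hp i) (hp k) hcyc hik
    linarith

/-- If every directed cycle in the envy graph of an allocation A has
weight at most 0, then setting p i equal to the maximum weight of a directed path
starting at agent i yields p i ≥ 0 for all i and (A, p) envy-free; in particular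
A is envy-freeable. -/
theorem heaviest_path_payments_envy_free
    (n m : ℕ) (hn : 1 ≤ n)
    (v : Fin n → Finset (Fin m) → ℝ)
    (A : Fin n → Finset (Fin m))
    (hdisj : ∀ i k, i ≠ k → Disjoint (A i) (A k))
    (hcover : Finset.univ.biUnion A = Finset.univ)
    (hcyc : ∀ (r : ℕ) (c : Fin (r + 2) → Fin n), Function.Injective c →
      (∑ t : Fin (r + 2), (v (c t) (A (c (t + 1))) - v (c t) (A (c t)))) ≤ 0)
    (p : Fin n → ℝ)
    (hp : ∀ i : Fin n, IsGreatest
      {x : ℝ | ∃ l : List (Fin n), l.Nodup ∧ l.head? = some i ∧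
        pathWeight (fun a b => v a (A b) - v a (A a)) l = x} (p i)) :
    (∀ i, 0 ≤ p i) ∧ (∀ i k : Fin n, v i (A i) + p i ≥ v i (A k) + p k) :=
  heaviest_path_payments_envy_free_general n m v A hcyc p hp
end

section
/- Let A be an envy-freeable allocation and let ℓ^max be the maximum weight of a directed path in the envy graph of A. Then there exists a payment vector p such that (A, p) is envy-free, p i ≤ ℓ^max for every agent i, and ∑_{i} p i ≤ (n − 1) · ℓ^max. -/
lemma pathWeight_nil {n : ℕ} (w : Fin n → Fin n → ℝ) : pathWeight w [] = 0 := rfl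

lemma pathWeight_single {n : ℕ} (w : Fin n → Fin n → ℝ) (a : Fin n) :
    pathWeight w [a] = 0 := rfl

lemma pathWeight_cons {n : ℕ} (w : Fin n → Fin n → ℝ) (a b : Fin n) (t : List (Fin n)) :
    pathWeight w (a :: b :: t) = w a b + pathWeight w (b :: t) := by
  simp [pathWeight]

lemma pathWeight_telescope {n : ℕ} (w : Fin n → Fin n → ℝ) (q : Fin n → ℝ)
    (hw : ∀ a b, w a b ≤ q a - q b) :
    ∀ (t : List (Fin n)) (a : Fin n),
      pathWeight w (a :: t) ≤ q a - q ((a :: t).getLast (by simp)) := by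
  intro t
  induction t with
  | nil => intro a; simp [pathWeight_single]
  | cons b t ih =>
    intro a
    rw [pathWeight_cons]
    have h1 := ih b
    have h2 := hw a b
    have : (a :: b :: t).getLast (by simp) = (b :: t).getLast (by simp) := by
      simp [List.getLast_cons]
    rw [this]
    linarith

lemma pathWeight_append_cons {n : ℕ} (w : Fin n → Fin n → ℝ) (i : Fin n) :
    ∀ (l₁ l₂ : List (Fin n)),
      pathWeight w (l₁ ++ i :: l₂) = pathWeight w (l₁ ++ [i]) + pathWeight w (i :: l₂) := by
  intro l₁
  induction l₁ with
  | nil => intro l₂; simp [pathWeight_single]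
  | cons a l₁ ih =>
    intro l₂
    cases l₁ with
    | nil => simp [pathWeight_cons, ih, pathWeight_single]
    | cons b t =>
      simp only [List.cons_append, pathWeight_cons]
      rw [← List.cons_append, ih l₂]
      simp only [List.cons_append]
      ring

/-- Let A be an envy-freeable allocation and ℓmax the maximum weight of
a directed path in the envy graph of A. Then there is a payment vector p with (A, p)
envy-free, p i ≤ ℓmax for every i, and ∑ i, p i ≤ (n − 1) · ℓmax. -/
theorem subsidy_bounded_by_heaviest_path
    (n m : ℕ) (hn : 1 ≤ n)
    (v : Fin n → Finset (Fin m) → ℝ)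
    (A : Fin n → Finset (Fin m))
    (hdisj : ∀ i k, i ≠ k → Disjoint (A i) (A k))
    (hcover : Finset.univ.biUnion A = Finset.univ)
    (hef : ∃ q : Fin n → ℝ, (∀ i, 0 ≤ q i) ∧
      ∀ i k : Fin n, v i (A i) + q i ≥ v i (A k) + q k)
    (ℓmax : ℝ)
    (hℓ : IsGreatest
      {x : ℝ | ∃ l : List (Fin n), l.Nodup ∧
        pathWeight (fun a b => v a (A b) - v a (A a)) l = x} ℓmax) :
    ∃ p : Fin n → ℝ, (∀ i, 0 ≤ p i) ∧
      (∀ i k : Fin n, v i (A i) + p i ≥ v i (A k) + p k) ∧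
      (∀ i, p i ≤ ℓmax) ∧
      (∑ i, p i) ≤ ((n : ℝ) - 1) * ℓmax := by
  obtain ⟨q, hq0, hq⟩ := hef
  set w : Fin n → Fin n → ℝ := fun a b => v a (A b) - v a (A a) with hwdef
  have hw : ∀ a b, w a b ≤ q a - q b := by
    intro a b; have := hq a b; simp only [hwdef]; linarith
  set S : Fin n → Set ℝ := fun i =>
    {x | ∃ l : List (Fin n), l.Nodup ∧ l.head? = some i ∧ pathWeight w l = x} with hSdef
  have hzeroS : ∀ i, (0 : ℝ) ∈ S i := by
    intro i; exact ⟨[i], by simp, by simp, pathWeight_single w i⟩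
  have hSne : ∀ i, (S i).Nonempty := fun i => ⟨0, hzeroS i⟩
  have hSub : ∀ i, ∀ x ∈ S i, x ≤ ℓmax := by
    rintro i x ⟨l, hnd, -, hx⟩; exact hℓ.2 ⟨l, hnd, hx⟩
  have hbdd : ∀ i, BddAbove (S i) := fun i => ⟨ℓmax, fun x hx => hSub i x hx⟩
  set p : Fin n → ℝ := fun i => sSup (S i) with hpdef
  have hp0 : ∀ i, 0 ≤ p i := fun i => le_csSup (hbdd i) (hzeroS i)
  have hpmax : ∀ i, p i ≤ ℓmax := fun i => csSup_le (hSne i) (hSub i)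
  -- key envy-freeness inequality
  have hkey : ∀ i k : Fin n, p k ≤ p i - w i k := by
    intro i k
    by_cases hik : i = k
    · subst hik; simp only [hwdef]; simp
    refine csSup_le (hSne k) ?_
    rintro x ⟨l, hnd, hhd, hx⟩
    obtain ⟨t, rfl⟩ : ∃ t, l = k :: t := by
      cases l with
      | nil => simp at hhd
      | cons a t =>
        simp only [List.head?_cons, Option.some.injEq] at hhd
        exact ⟨t, by rw [hhd]⟩
    have hgoal : w i k + x ≤ p i → x ≤ p i - w i k := by intro h; linarith
    apply hgoal
    by_cases hmem : i ∈ k :: t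
    · -- i appears in the path; split and use the nonpositive cycle
      have hit : i ∈ t := by
        rcases List.mem_cons.mp hmem with h | h
        · exact absurd h hik
        · exact h
      obtain ⟨r₁, r₂, rfl⟩ := List.append_of_mem hit
      have hsplit : pathWeight w (k :: (r₁ ++ i :: r₂))
          = pathWeight w ((k :: r₁) ++ [i]) + pathWeight w (i :: r₂) := by
        rw [show k :: (r₁ ++ i :: r₂) = (k :: r₁) ++ i :: r₂ by simp]
        exact pathWeight_append_cons w i (k :: r₁) r₂
      have hcyc : w i k + pathWeight w ((k :: r₁) ++ [i]) ≤ 0 := by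
        have h1 : pathWeight w (i :: ((k :: r₁) ++ [i]))
            = w i k + pathWeight w ((k :: r₁) ++ [i]) := by
          rw [show (k :: r₁) ++ [i] = k :: (r₁ ++ [i]) by simp, pathWeight_cons]
        have h2 := pathWeight_telescope w q hw ((k :: r₁) ++ [i]) i
        have h3 : ((i :: ((k :: r₁) ++ [i]))).getLast (by simp) = i := by
          simp [List.getLast_append]
        rw [h3, h1] at h2
        linarith
      have hnd2 : (i :: r₂).Nodup := by
        refine hnd.sublist ?_
        rw [show k :: (r₁ ++ i :: r₂) = (k :: r₁) ++ i :: r₂ by simp]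
        exact List.sublist_append_right _ _
      have hmem2 : pathWeight w (i :: r₂) ∈ S i := ⟨i :: r₂, hnd2, by simp, rfl⟩
      have := le_csSup (hbdd i) hmem2
      rw [← hx, hsplit]
      linarith
    · -- i not in the path: prepend it
      have hnd2 : (i :: k :: t).Nodup := List.nodup_cons.mpr ⟨hmem, hnd⟩
      have : w i k + x ∈ S i := by
        refine ⟨i :: k :: t, hnd2, by simp, ?_⟩
        rw [pathWeight_cons, hx]
      exact le_csSup (hbdd i) this
  -- agent with zero payment: the one minimizing q
  obtain ⟨i₀, -, hi₀⟩ := Finset.exists_min_image Finset.univ q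
    ⟨⟨0, hn⟩, Finset.mem_univ _⟩
  have hpz : p i₀ = 0 := by
    refine le_antisymm (csSup_le (hSne i₀) ?_) (hp0 i₀)
    rintro x ⟨l, hnd, hhd, hx⟩
    obtain ⟨t, rfl⟩ : ∃ t, l = i₀ :: t := by
      cases l with
      | nil => simp at hhd
      | cons a t =>
        simp only [List.head?_cons, Option.some.injEq] at hhd
        exact ⟨t, by rw [hhd]⟩
    have h2 := pathWeight_telescope w q hw t i₀
    have h3 := hi₀ ((i₀ :: t).getLast (by simp)) (Finset.mem_univ _)
    rw [hx] at h2
    linarith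
  have hl0 : 0 ≤ ℓmax := hℓ.2 ⟨[], by simp, rfl⟩
  refine ⟨p, hp0, ?_, hpmax, ?_⟩
  · intro i k
    have := hkey i k
    simp only [hwdef] at this
    linarith
  · have hsum : ∑ i, p i = ∑ i ∈ Finset.univ.erase i₀, p i + p i₀ :=
      (Finset.sum_erase_add _ _ (Finset.mem_univ i₀)).symm
    have hb : ∑ i ∈ Finset.univ.erase i₀, p i ≤ (Finset.univ.erase i₀).card • ℓmax :=
      Finset.sum_le_card_nsmul _ _ _ (fun x _ => hpmax x)
    have hcard : (Finset.univ.erase i₀).card = n - 1 := by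
      rw [Finset.card_erase_of_mem (Finset.mem_univ _), Finset.card_univ, Fintype.card_fin]
    rw [hsum, hpz, add_zero]
    rw [hcard] at hb
    calc ∑ i ∈ Finset.univ.erase i₀, p i ≤ (n - 1 : ℕ) • ℓmax := hb
      _ = ((n : ℝ) - 1) * ℓmax := by
          rw [nsmul_eq_mul, Nat.cast_sub hn, Nat.cast_one]
end

section
/- For additive valuations with item values in [0,1]: if an allocation A is envy-freeable, then there exists a payment vector p such that (A, p) is envy-free, p i ≤ m for every agent i, and ∑_{i} p i ≤ (n − 1) · m. -/
/-- For additive valuations with item values in [0,1]: if an allocation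
A is envy-freeable, then there is a payment vector p with (A, p) envy-free,
p i ≤ m for every agent i, and ∑ i, p i ≤ (n − 1) · m. -/
theorem envy_freeable_subsidy_at_most_m_each
    (n m : ℕ) (hn : 1 ≤ n)
    (v : Fin n → Fin m → ℝ)
    (hv0 : ∀ i j, 0 ≤ v i j) (hv1 : ∀ i j, v i j ≤ 1)
    (A : Fin n → Finset (Fin m))
    (hdisj : ∀ i k, i ≠ k → Disjoint (A i) (A k))
    (hcover : Finset.univ.biUnion A = Finset.univ)
    (hef : ∃ q : Fin n → ℝ, (∀ i, 0 ≤ q i) ∧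
      ∀ i k : Fin n, (∑ j ∈ A i, v i j) + q i ≥ (∑ j ∈ A k, v i j) + q k) :
    ∃ p : Fin n → ℝ, (∀ i, 0 ≤ p i) ∧
      (∀ i k : Fin n, (∑ j ∈ A i, v i j) + p i ≥ (∑ j ∈ A k, v i j) + p k) ∧
      (∀ i, p i ≤ (m : ℝ)) ∧
      (∑ i, p i) ≤ ((n : ℝ) - 1) * m := by
  obtain ⟨q, hq0, hqef⟩ := hef
  haveI : NeZero n := ⟨Nat.one_le_iff_ne_zero.mp hn⟩
  obtain ⟨i0, -, hi0min⟩ := Finset.exists_min_image Finset.univ q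
    ⟨0, Finset.mem_univ 0⟩
  refine ⟨fun i => q i - q i0, ?_, ?_, ?_, ?_⟩
  · intro i
    have := hi0min i (Finset.mem_univ i)
    dsimp only
    linarith
  · intro i k
    have := hqef i k
    dsimp only
    linarith
  · intro i
    have h1 := hqef i0 i
    have h2 : (∑ j ∈ A i, v i0 j) ≥ 0 :=
      Finset.sum_nonneg fun j _ => hv0 i0 j
    have h3 : (∑ j ∈ A i0, v i0 j) ≤ (m : ℝ) := by
      calc (∑ j ∈ A i0, v i0 j) ≤ ∑ j ∈ A i0, (1 : ℝ) :=
            Finset.sum_le_sum fun j _ => hv1 i0 j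
        _ = (A i0).card := by simp
        _ ≤ (m : ℝ) := by
            exact_mod_cast (A i0).card_le_univ.trans_eq (by simp)
    dsimp only
    linarith
  · have hbound : ∀ i, q i - q i0 ≤ (m : ℝ) := by
      intro i
      have h1 := hqef i0 i
      have h2 : (∑ j ∈ A i, v i0 j) ≥ 0 :=
        Finset.sum_nonneg fun j _ => hv0 i0 j
      have h3 : (∑ j ∈ A i0, v i0 j) ≤ (m : ℝ) := by
        calc (∑ j ∈ A i0, v i0 j) ≤ ∑ j ∈ A i0, (1 : ℝ) :=
              Finset.sum_le_sum fun j _ => hv1 i0 j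
          _ = (A i0).card := by simp
          _ ≤ (m : ℝ) := by
              exact_mod_cast (A i0).card_le_univ.trans_eq (by simp)
      linarith
    have hsplit : (∑ i, (q i - q i0)) =
        (∑ i ∈ Finset.univ.erase i0, (q i - q i0)) := by
      rw [← Finset.add_sum_erase Finset.univ _ (Finset.mem_univ i0)]
      simp
    rw [hsplit]
    have hcard : ((Finset.univ.erase i0).card : ℝ) = (n : ℝ) - 1 := by
      rw [Finset.card_erase_of_mem (Finset.mem_univ i0)]
      simp
      push_cast [Nat.cast_sub hn]
      ring
    calc (∑ i ∈ Finset.univ.erase i0, (q i - q i0))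
        ≤ ∑ i ∈ Finset.univ.erase i0, (m : ℝ) :=
          Finset.sum_le_sum fun i _ => hbound i
      _ = ((Finset.univ.erase i0).card : ℝ) * m := by
          rw [Finset.sum_const, nsmul_eq_mul]
      _ = ((n : ℝ) - 1) * m := by rw [hcard]
end

section
/- For arbitrary valuation functions v_i : Finset (Fin m) → ℝ and any allocation A, there exists a permutation π of Fin n such that the allocation i ↦ A_{π(i)} (assigning bundle A_{π(i)} to agent i) is envy-freeable. -/
/-!
Choose `π` maximizing the welfare `∑ i, v i (A (π i))`. In the envy graph with edge weights
`w i k = v i (A (π k)) - v i (A (π i))`, every cycle has nonpositive weight, since rotating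
the bundles along it cannot increase welfare. So the payment `p i`, the largest weight of a
simple path from `i`, is nonnegative and satisfies `w i k + p k ≤ p i`: prefixing a best path
from `k` with the edge `i → k` gives either a simple path from `i` or, if that path passes
through `i`, a cycle followed by a simple path from `i`.
-/

open Equiv Finset

namespace EnvyGraph

variable {ι : Type*}

/-- The weight of the walk that starts at `i` and then visits the vertices of `l` in order. -/
def walkWeight (w : ι → ι → ℝ) : ι → List ι → ℝ
  | _, [] => 0
  | i, k :: l => w i k + walkWeight w k l

theorem walkWeight_append_cons (w : ι → ι → ℝ) (i a : ι) (l₁ l₂ : List ι) :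
    walkWeight w i (l₁ ++ a :: l₂) = walkWeight w i (l₁ ++ [a]) + walkWeight w a l₂ := by
  induction l₁ generalizing i with
  | nil => simp [walkWeight]
  | cons b l₁ ih => simp only [List.cons_append, walkWeight, ih]; ring

theorem walkWeight_append_singleton (w : ι → ι → ℝ) (i a : ι) (l : List ι) :
    walkWeight w i (l ++ [a]) = (List.zipWith w (i :: l) (l ++ [a])).sum := by
  induction l generalizing i with
  | nil => simp [walkWeight]
  | cons k l ih => simp [walkWeight, ih]

theorem sum_zipWith_rotate_one_eq_sum_formPerm [DecidableEq ι] (w : ι → ι → ℝ)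
    {c : List ι} (hc : c.Nodup) :
    (List.zipWith w c (c.rotate 1)).sum = ∑ x ∈ c.toFinset, w x (c.formPerm x) := by
  rw [List.sum_toFinset _ hc]
  congr 1
  apply List.ext_getElem
  · simp
  · intro j h₁ h₂
    simp [List.formPerm_apply_getElem _ hc, List.getElem_rotate]

variable [Fintype ι] [DecidableEq ι] {w : ι → ι → ℝ}

theorem walkWeight_cycle_nonpos (hdiag : ∀ x, w x x = 0)
    (hcyc : ∀ σ : Perm ι, ∑ x, w x (σ x) ≤ 0) {a : ι} {l : List ι} (hl : (a :: l).Nodup) :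
    walkWeight w a (l ++ [a]) ≤ 0 := by
  have hsupp : ∑ x ∈ (a :: l).toFinset, w x ((a :: l).formPerm x)
      = ∑ x, w x ((a :: l).formPerm x) :=
    sum_subset (subset_univ _) fun x _ hx => by
      rw [List.formPerm_apply_of_notMem (by simpa using hx), hdiag]
  calc walkWeight w a (l ++ [a])
      = (List.zipWith w (a :: l) ((a :: l).rotate 1)).sum := by
        rw [walkWeight_append_singleton, List.rotate_cons_succ, List.rotate_zero]
    _ = ∑ x, w x ((a :: l).formPerm x) := by
        rw [sum_zipWith_rotate_one_eq_sum_formPerm w hl, hsupp]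
    _ ≤ 0 := hcyc _

variable (w)

/-- The largest weight of a simple path starting at `i`, the trivial path included. -/
noncomputable def maxPathWeight (i : ι) : ℝ :=
  (univ.filter fun l : {l : List ι // l.Nodup} => i ∉ l.1).sup'
    ⟨⟨[], List.nodup_nil⟩, by simp⟩ fun l => walkWeight w i l.1

theorem walkWeight_le_maxPathWeight {i : ι} {l : List ι} (hl : (i :: l).Nodup) :
    walkWeight w i l ≤ maxPathWeight w i :=
  Finset.le_sup' (fun l : {l : List ι // l.Nodup} => walkWeight w i l.1)
    (b := ⟨l, hl.of_cons⟩) (by simpa using (List.nodup_cons.1 hl).1)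

theorem exists_walkWeight_eq_maxPathWeight (i : ι) :
    ∃ l, (i :: l).Nodup ∧ walkWeight w i l = maxPathWeight w i := by
  obtain ⟨⟨l, hl⟩, hmem, heq⟩ := exists_mem_eq_sup' _
    fun l : {l : List ι // l.Nodup} => walkWeight w i l.1
  exact ⟨l, List.nodup_cons.2 ⟨(mem_filter.1 hmem).2, hl⟩, heq.symm⟩

theorem maxPathWeight_nonneg (i : ι) : 0 ≤ maxPathWeight w i :=
  walkWeight_le_maxPathWeight w (List.nodup_singleton i)

variable {w}

theorem add_maxPathWeight_le (hdiag : ∀ x, w x x = 0)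
    (hcyc : ∀ σ : Perm ι, ∑ x, w x (σ x) ≤ 0) (i k : ι) :
    w i k + maxPathWeight w k ≤ maxPathWeight w i := by
  obtain ⟨l, hl, hmax⟩ := exists_walkWeight_eq_maxPathWeight w k
  rw [← hmax]
  show walkWeight w i (k :: l) ≤ maxPathWeight w i
  by_cases hi : i ∈ k :: l
  · obtain ⟨pre, post, hsplit⟩ := List.append_of_mem hi
    rw [hsplit] at hl ⊢
    have hl' := List.nodup_middle.1 hl
    have hpre : (i :: pre).Nodup := hl'.sublist ((List.sublist_append_left pre post).cons_cons i)
    have hpost : (i :: post).Nodup := hl'.sublist ((List.sublist_append_right pre post).cons_cons i)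
    rw [walkWeight_append_cons]
    linarith [walkWeight_cycle_nonpos hdiag hcyc hpre, walkWeight_le_maxPathWeight w hpost]
  · exact walkWeight_le_maxPathWeight w (List.nodup_cons.2 ⟨hi, hl⟩)

end EnvyGraph

open EnvyGraph in
theorem exists_envyFree_payments_of_sum_le {ι : Type*} [Fintype ι] [DecidableEq ι]
    (u : ι → ι → ℝ) (hmax : ∀ σ : Perm ι, ∑ i, u i (σ i) ≤ ∑ i, u i i) :
    ∃ p : ι → ℝ, (∀ i, 0 ≤ p i) ∧ ∀ i k, u i k + p k ≤ u i i + p i := by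
  set envy : ι → ι → ℝ := fun i k => u i k - u i i
  have hcyc (σ : Perm ι) : ∑ x, envy x (σ x) ≤ 0 := by
    simpa [envy, sum_sub_distrib] using hmax σ
  refine ⟨maxPathWeight envy, maxPathWeight_nonneg envy, fun i k => ?_⟩
  linarith [add_maxPathWeight_le (w := envy) (by simp [envy]) hcyc i k]

theorem exists_envy_freeable_permutation_general
    (n m : ℕ)
    (v : Fin n → Finset (Fin m) → ℝ)
    (A : Fin n → Finset (Fin m)) :
    ∃ π : Equiv.Perm (Fin n), ∃ p : Fin n → ℝ, (∀ i, 0 ≤ p i) ∧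
      ∀ i k : Fin n, v i (A (π i)) + p i ≥ v i (A (π k)) + p k := by
  obtain ⟨π, -, hπ⟩ :=
    exists_max_image univ (fun σ : Perm (Fin n) => ∑ i, v i (A (σ i))) univ_nonempty
  obtain ⟨p, hp0, hp⟩ := exists_envyFree_payments_of_sum_le (fun i k => v i (A (π k)))
    fun σ => hπ (σ.trans π) (mem_univ _)
  exact ⟨π, p, hp0, fun i k => hp i k⟩

/-- For arbitrary valuation functions and any allocation A, there exists
a permutation π of the agents such that the allocation i ↦ A (π i) is envy-freeable. -/
theorem exists_envy_freeable_permutation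
    (n m : ℕ) (hn : 1 ≤ n)
    (v : Fin n → Finset (Fin m) → ℝ)
    (A : Fin n → Finset (Fin m))
    (hdisj : ∀ i k, i ≠ k → Disjoint (A i) (A k))
    (hcover : Finset.univ.biUnion A = Finset.univ) :
    ∃ π : Equiv.Perm (Fin n), ∃ p : Fin n → ℝ, (∀ i, 0 ≤ p i) ∧
      ∀ i k : Fin n, v i (A (π i)) + p i ≥ v i (A (π k)) + p k :=
  exists_envy_freeable_permutation_general n m v A
end

section
/- If μ is a greedy-optimal matching schedule for additive valuations with item values in [0,1], then the output allocation of μ is envy-freeable. -/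
/-!
Permuting the bundles by `π` permutes, in every round `t`, the items `μ t i` among the agents;
these items are all still available in round `t`, so greedy optimality bounds the permuted
round by the actual one, and summing over rounds shows that no permutation of the bundles raises
the total value. By Halpern–Shah this suffices: the envy weights `v_i(A_k) - v_i(A_i)` then admit
no positive cycle, and paying agent `i` the largest weight of a walk starting at `i` removes all
envy.
-/

open Finset

section Walks

variable {ι : Type*} (w : ι → ι → ℝ)

def walkWeight (c : ℕ → ι) (ℓ : ℕ) : ℝ :=
  ∑ j ∈ range ℓ, w (c j) (c (j + 1))

@[simp]
lemma walkWeight_zero (c : ℕ → ι) : walkWeight w c 0 = 0 := by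
  simp [walkWeight]

lemma walkWeight_add (c : ℕ → ι) (a b : ℕ) :
    walkWeight w c (a + b) = walkWeight w c a + walkWeight w (fun j => c (a + j)) b := by
  simp only [walkWeight, sum_range_add, add_assoc]

lemma walkWeight_congr {c c' : ℕ → ι} {ℓ : ℕ} (h : ∀ j ≤ ℓ, c j = c' j) :
    walkWeight w c ℓ = walkWeight w c' ℓ :=
  sum_congr rfl fun j hj => by
    rw [mem_range] at hj
    rw [h j hj.le, h (j + 1) hj]

lemma walkWeight_cons (i : ι) (c : ℕ → ι) (ℓ : ℕ) :
    walkWeight w (fun j => Nat.casesOn j i c) (ℓ + 1) = w i (c 0) + walkWeight w c ℓ := by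
  rw [walkWeight, sum_range_succ', add_comm]
  rfl

lemma walkWeight_le_mul (c : ℕ → ι) (ℓ : ℕ) {M : ℝ} (hM : ∀ i k, w i k ≤ M) :
    walkWeight w c ℓ ≤ ℓ * M := by
  simpa [walkWeight] using sum_le_sum fun j (_ : j ∈ range ℓ) => hM (c j) (c (j + 1))

/-- A walk that revisits a vertex (`c a = c b`) splits into the closed walk from `a` to `b`
and the walk with that detour cut out, which keeps both endpoints. -/
lemma exists_walkWeight_eq_add_of_eq (c : ℕ → ι) {a b ℓ : ℕ} (hab : a < b) (hbℓ : b ≤ ℓ)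
    (hc : c a = c b) :
    ∃ c' : ℕ → ι, c' 0 = c 0 ∧ c' (ℓ - (b - a)) = c ℓ ∧
      walkWeight w c ℓ = walkWeight w (fun j => c (a + j)) (b - a) +
        walkWeight w c' (ℓ - (b - a)) := by
  obtain ⟨d, rfl⟩ := Nat.exists_eq_add_of_le hab.le
  obtain ⟨e, rfl⟩ := Nat.exists_eq_add_of_le hbℓ
  rw [Nat.add_sub_cancel_left, show a + d + e - d = a + e by omega]
  set c' : ℕ → ι := fun j => if j ≤ a then c j else c (j + d)
  have hshift : (fun j => c' (a + j)) = fun j => c (a + d + j) := by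
    funext j
    rcases j.eq_zero_or_pos with rfl | hj
    · simpa [c'] using hc
    · simp only [c', if_neg (show ¬a + j ≤ a by omega)]
      congr 1; omega
  refine ⟨c', by simp [c'], congrFun hshift e, ?_⟩
  rw [walkWeight_add w c' a e, hshift, walkWeight_congr w (c' := c) (fun j hj => if_pos hj),
    walkWeight_add w c (a + d) e, walkWeight_add w c a d]
  ring

/-- The vertices off the cycle are fixed by `formPerm` and contribute `w i i = 0`. -/
lemma walkWeight_eq_sum_formPerm [Fintype ι] [DecidableEq ι] (hw0 : ∀ i, w i i = 0)
    {c : ℕ → ι} {ℓ : ℕ} (hinj : Set.InjOn c (Set.Iio ℓ)) (hclosed : c ℓ = c 0) :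
    walkWeight w c ℓ = ∑ i, w i (((List.range ℓ).map c).formPerm i) := by
  set l := (List.range ℓ).map c
  have hnodup : l.Nodup :=
    List.nodup_range.map_on fun a ha b hb hab =>
      hinj (by simpa using ha) (by simpa using hb) hab
  have hstep : ∀ j < ℓ, l.formPerm (c j) = c (j + 1) := by
    intro j hj
    have := List.formPerm_apply_getElem l hnodup j (by simpa [l] using hj)
    simp only [l, List.getElem_map, List.getElem_range, List.length_map,
      List.length_range] at this
    rw [this]
    rcases (Nat.succ_le_of_lt hj).lt_or_eq with h | h
    · rw [Nat.mod_eq_of_lt h]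
    · rw [← Nat.succ_eq_add_one, h, Nat.mod_self, hclosed]
  have hsupp : ∑ i ∈ (range ℓ).image c, w i (l.formPerm i) = ∑ i, w i (l.formPerm i) :=
    sum_subset (subset_univ _) fun i _ hi => by
      rw [List.formPerm_apply_of_notMem (by simpa [l] using hi), hw0]
  rw [← hsupp, sum_image fun a ha b hb hab => hinj (by simpa using ha) (by simpa using hb) hab]
  exact sum_congr rfl fun j hj => by rw [hstep j (mem_range.mp hj)]

/-- Closed walks decompose into cycles, and a cycle is the nontrivial part of a permutation. -/
lemma walkWeight_nonpos_of_closed [Fintype ι] [DecidableEq ι] (hw0 : ∀ i, w i i = 0)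
    (hperm : ∀ π : Equiv.Perm ι, ∑ i, w i (π i) ≤ 0) (ℓ : ℕ) (c : ℕ → ι) (hclosed : c ℓ = c 0) :
    walkWeight w c ℓ ≤ 0 := by
  induction ℓ using Nat.strong_induction_on generalizing c with
  | _ ℓ ih =>
    by_cases hinj : Set.InjOn c (Set.Iio ℓ)
    · rw [walkWeight_eq_sum_formPerm w hw0 hinj hclosed]
      exact hperm _
    obtain ⟨a, b, hab, hbℓ, hc⟩ : ∃ a b, a < b ∧ b < ℓ ∧ c a = c b := by
      simp only [Set.InjOn, Set.mem_Iio, not_forall] at hinj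
      obtain ⟨a, ha, b, hb, hc, hne⟩ := hinj
      rcases Nat.lt_or_gt_of_ne hne with h | h
      exacts [⟨a, b, h, hb, hc⟩, ⟨b, a, h, ha, hc.symm⟩]
    obtain ⟨c', hc'0, hc'ℓ, hsplit⟩ := exists_walkWeight_eq_add_of_eq w c hab hbℓ.le hc
    have hcycle := ih (b - a) (by omega) (fun j => c (a + j))
      (by simpa [Nat.add_sub_cancel' hab.le] using hc.symm)
    have hrest := ih (ℓ - (b - a)) (by omega) c' (by rw [hc'ℓ, hc'0, hclosed])
    linarith

/-- Pigeonhole: a walk longer than `card ι` revisits a vertex, and cutting out the closed walk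
in between does not decrease the weight. -/
lemma walkWeight_le_card_mul [Fintype ι] (hclosed : ∀ ℓ c, c ℓ = c 0 → walkWeight w c ℓ ≤ 0)
    {M : ℝ} (hM0 : 0 ≤ M) (hM : ∀ i k, w i k ≤ M) (ℓ : ℕ) (c : ℕ → ι) :
    walkWeight w c ℓ ≤ Fintype.card ι * M := by
  induction ℓ using Nat.strong_induction_on generalizing c with
  | _ ℓ ih =>
    by_cases hℓ : ℓ ≤ Fintype.card ι
    · exact (walkWeight_le_mul w c ℓ hM).trans (by gcongr)
    obtain ⟨a, b, hab, hbℓ, hc⟩ : ∃ a b, a < b ∧ b ≤ ℓ ∧ c a = c b := by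
      obtain ⟨a, ha, b, hb, hne, hc⟩ := exists_ne_map_eq_of_card_lt_of_maps_to
        (s := range (Fintype.card ι + 1)) (t := univ) (by simp)
        fun j _ => mem_coe.2 (mem_univ (c j))
      rw [mem_range] at ha hb
      rcases Nat.lt_or_gt_of_ne hne with h | h
      exacts [⟨a, b, h, by omega, hc⟩, ⟨b, a, h, by omega, hc.symm⟩]
    obtain ⟨c', -, -, hsplit⟩ := exists_walkWeight_eq_add_of_eq w c hab hbℓ hc
    have hcycle := hclosed (b - a) (fun j => c (a + j))
      (by simpa [Nat.add_sub_cancel' hab.le] using hc.symm)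
    have hrest := ih (ℓ - (b - a)) (by omega) c'
    linarith

/-- The potential of `i` is the supremum of the weights of all walks starting at `i`. -/
theorem exists_potential_of_sum_perm_nonpos [Fintype ι] [DecidableEq ι] (hw0 : ∀ i, w i i = 0)
    (hperm : ∀ π : Equiv.Perm ι, ∑ i, w i (π i) ≤ 0) :
    ∃ p : ι → ℝ, (∀ i, 0 ≤ p i) ∧ ∀ i k, w i k + p k ≤ p i := by
  let walkFrom (i : ι) := {x : ℕ × (ℕ → ι) // x.2 0 = i}
  have hbdd (i : ι) : BddAbove (Set.range fun x : walkFrom i => walkWeight w x.1.2 x.1.1) := by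
    refine ⟨Fintype.card ι * ∑ q : ι × ι, |w q.1 q.2|, ?_⟩
    rintro _ ⟨x, rfl⟩
    refine walkWeight_le_card_mul w (walkWeight_nonpos_of_closed w hw0 hperm)
      (sum_nonneg fun q _ => abs_nonneg _) (fun i k => ?_) _ _
    exact (le_abs_self _).trans
      (single_le_sum (f := fun q : ι × ι => |w q.1 q.2|) (fun q _ => abs_nonneg _)
        (mem_univ (i, k)))
  refine ⟨fun i => ⨆ x : walkFrom i, walkWeight w x.1.2 x.1.1, fun i => ?_, fun i k => ?_⟩
  · simpa using le_ciSup (hbdd i) ⟨(0, fun _ => i), rfl⟩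
  · have : Nonempty (walkFrom k) := ⟨⟨(0, fun _ => k), rfl⟩⟩
    rw [← le_sub_iff_add_le', ciSup_le_iff (hbdd k)]
    rintro ⟨⟨ℓ, c⟩, rfl : c 0 = k⟩
    rw [le_sub_iff_add_le', ← walkWeight_cons]
    exact le_ciSup (hbdd i) ⟨(ℓ + 1, fun j => Nat.casesOn j i c), rfl⟩

end Walks

/-- Halpern–Shah: take potentials of the envy weights `val i k - val i i`. -/
theorem exists_envyFree_payments {ι : Type*} [Fintype ι] [DecidableEq ι] (val : ι → ι → ℝ)
    (hperm : ∀ π : Equiv.Perm ι, ∑ i, val i (π i) ≤ ∑ i, val i i) :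
    ∃ p : ι → ℝ, (∀ i, 0 ≤ p i) ∧ ∀ i k, val i k + p k ≤ val i i + p i := by
  obtain ⟨p, hp0, hp⟩ := exists_potential_of_sum_perm_nonpos (fun i k => val i k - val i i)
    (fun i => sub_self _) fun π => by simpa [sum_sub_distrib] using hperm π
  exact ⟨p, hp0, fun i k => by linarith [hp i k]⟩

theorem greedy_schedule_envy_freeable_general
    (n T m : ℕ)
    (v : Fin n → Fin m → ℝ)
    (μ : Fin T → Fin n → Fin m)
    (hμ : Function.Bijective (fun q : Fin T × Fin n => μ q.1 q.2))
    (hgreedy : ∀ t : Fin T, ∀ σ : Fin n → Fin m, Function.Injective σ →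
      (∀ i, σ i ∈ Finset.univ.filter
        (fun j => ∀ s : Fin T, (s : ℕ) < (t : ℕ) → ∀ i' : Fin n, μ s i' ≠ j)) →
      (∑ i, v i (σ i)) ≤ ∑ i, v i (μ t i)) :
    ∃ p : Fin n → ℝ, (∀ i, 0 ≤ p i) ∧
      ∀ i k : Fin n,
        (∑ j ∈ Finset.univ.image (fun t => μ t i), v i j) + p i ≥
        (∑ j ∈ Finset.univ.image (fun t => μ t k), v i j) + p k := by
  have hμ_inj {s t : Fin T} {i k : Fin n} (h : μ s i = μ t k) : s = t ∧ i = k :=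
    Prod.ext_iff.mp (hμ.injective (a₁ := (s, i)) (a₂ := (t, k)) h)
  have hbundle (i k : Fin n) :
      ∑ j ∈ univ.image (fun t => μ t k), v i j = ∑ t, v i (μ t k) :=
    sum_image fun s _ t _ h => (hμ_inj h).1
  have hround (t : Fin T) (π : Equiv.Perm (Fin n)) :
      ∑ i, v i (μ t (π i)) ≤ ∑ i, v i (μ t i) := by
    refine hgreedy t _ (fun x y h => π.injective (hμ_inj h).2) fun i => ?_
    simp only [mem_filter, mem_univ, true_and]
    exact fun s hs i' h => hs.ne (congrArg Fin.val (hμ_inj h).1)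
  obtain ⟨p, hp0, hp⟩ := exists_envyFree_payments (fun i k => ∑ t, v i (μ t k)) fun π => by
    rw [sum_comm, sum_comm (γ := Fin n)]
    exact sum_le_sum fun t _ => hround t π
  exact ⟨p, hp0, fun i k => by simpa only [hbundle] using hp i k⟩

/-- If μ is a greedy-optimal matching schedule for additive valuations
with item values in [0,1], then the output allocation of μ (agent i receives the
bundle {μ t i : t ∈ Fin T}) is envy-freeable. -/
theorem greedy_schedule_envy_freeable
    (n T m : ℕ) (hn : 1 ≤ n) (hT : 1 ≤ T) (hm : m = n * T)
    (v : Fin n → Fin m → ℝ)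
    (hv0 : ∀ i j, 0 ≤ v i j) (hv1 : ∀ i j, v i j ≤ 1)
    (μ : Fin T → Fin n → Fin m)
    (hμ : Function.Bijective (fun q : Fin T × Fin n => μ q.1 q.2))
    (hgreedy : ∀ t : Fin T, ∀ σ : Fin n → Fin m, Function.Injective σ →
      (∀ i, σ i ∈ Finset.univ.filter
        (fun j => ∀ s : Fin T, (s : ℕ) < (t : ℕ) → ∀ i' : Fin n, μ s i' ≠ j)) →
      (∑ i, v i (σ i)) ≤ ∑ i, v i (μ t i)) :
    ∃ p : Fin n → ℝ, (∀ i, 0 ≤ p i) ∧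
      ∀ i k : Fin n,
        (∑ j ∈ Finset.univ.image (fun t => μ t i), v i j) + p i ≥
        (∑ j ∈ Finset.univ.image (fun t => μ t k), v i j) + p k :=
  greedy_schedule_envy_freeable_general n T m v μ hμ hgreedy
end

section
/- If μ is a greedy-optimal matching schedule for additive valuations with item values in [0,1], then the output allocation of μ is EF1. -/
/-!
Greedy optimality of round `t` implies that no item handed out in a later round is worth more
to agent `i` than the item `i` received in round `t`: otherwise giving `i` that item instead would
yield a better matching of the items still available. Hence, in agent `i`'s valuation, agent
`k`'s item of round `t + 1` is dominated by `i`'s own item of round `t`. Summing over the rounds,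
`k`'s bundle without its first-round item is worth at most `i`'s bundle
without its last-round item, hence at most `i`'s whole bundle.
-/

open Function Finset

theorem Function.Injective.update_of_notMem_range {ι α : Type*} [DecidableEq ι] {f : ι → α}
    (hf : Injective f) (i : ι) {x : α} (hx : x ∉ Set.range f) : Injective (update f i x) := by
  intro a b hab
  by_cases ha : a = i <;> by_cases hb : b = i
  · rw [ha, hb]
  · subst ha
    rw [update_self, update_of_ne hb] at hab
    exact absurd ⟨b, hab.symm⟩ hx
  · subst hb
    rw [update_self, update_of_ne ha] at hab
    exact absurd ⟨a, hab⟩ hx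
  · rw [update_of_ne ha, update_of_ne hb] at hab
    exact hf hab

theorem le_of_isMaxWeight_of_notMem_range {ι α : Type*} [Fintype ι] [DecidableEq ι]
    {v : ι → α → ℝ} {A : Finset α} {f : ι → α} (hf : Injective f)
    (hmax : ∀ σ : ι → α, Injective σ → (∀ i, σ i ∈ A) → ∑ i, v i (σ i) ≤ ∑ i, v i (f i))
    (hfA : ∀ i, f i ∈ A) {x : α} (hxA : x ∈ A) (hx : x ∉ Set.range f) (i : ι) :
    v i x ≤ v i (f i) := by
  have hswap := hmax (update f i x) (hf.update_of_notMem_range i hx) fun j => by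
    rcases eq_or_ne j i with rfl | hj
    · rwa [update_self]
    · rw [update_of_ne hj]; exact hfA j
  rw [Fintype.sum_eq_add_sum_compl i, Fintype.sum_eq_add_sum_compl i] at hswap
  simp only [update_self] at hswap
  rw [sum_congr rfl fun j hj => by rw [update_of_ne (mem_compl.1 hj ∘ mem_singleton.2)]] at hswap
  linarith

theorem Fin.sum_le_head_add_sum {M : Type*} [AddCommMonoid M] [PartialOrder M]
    [IsOrderedAddMonoid M] {N : ℕ} {a b : Fin (N + 1) → M}
    (hstep : ∀ t : Fin N, b t.succ ≤ a t.castSucc) (hlast : 0 ≤ a (Fin.last N)) :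
    ∑ t, b t ≤ b 0 + ∑ t, a t := by
  rw [Fin.sum_univ_succ, Fin.sum_univ_castSucc]
  gcongr
  exact le_add_of_le_of_nonneg (sum_le_sum fun t _ => hstep t) hlast

namespace MatchingSchedule

variable {n T m : ℕ} {μ : Fin T → Fin n → Fin m}

def unassignedBefore (μ : Fin T → Fin n → Fin m) (t : Fin T) : Finset (Fin m) :=
  univ.filter fun j => ∀ s : Fin T, (s : ℕ) < (t : ℕ) → ∀ i' : Fin n, μ s i' ≠ j

theorem eq_and_eq_of_apply_eq (hμ : Injective fun q : Fin T × Fin n => μ q.1 q.2)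
    {s t : Fin T} {i k : Fin n} (h : μ s i = μ t k) : s = t ∧ i = k :=
  Prod.ext_iff.1 (@hμ (s, i) (t, k) h)

theorem injective_round (hμ : Injective fun q : Fin T × Fin n => μ q.1 q.2) (t : Fin T) :
    Injective (μ t) := fun _ _ h => (eq_and_eq_of_apply_eq hμ h).2

theorem injective_bundle (hμ : Injective fun q : Fin T × Fin n => μ q.1 q.2) (k : Fin n) :
    Injective fun t => μ t k := fun _ _ h => (eq_and_eq_of_apply_eq hμ h).1

theorem mem_unassignedBefore_iff (hμ : Injective fun q : Fin T × Fin n => μ q.1 q.2)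
    {s t : Fin T} {i : Fin n} :
    μ s i ∈ unassignedBefore μ t ↔ t ≤ s := by
  simp only [unassignedBefore, mem_filter, mem_univ, true_and]
  refine ⟨fun h => not_lt.1 fun hst => h s hst i rfl, fun hts r hr i' hri => ?_⟩
  obtain rfl := (eq_and_eq_of_apply_eq hμ hri).1
  exact absurd hts (not_le.2 hr)

theorem notMem_range_round (hμ : Injective fun q : Fin T × Fin n => μ q.1 q.2) {s t : Fin T}
    (hst : s ≠ t) (k : Fin n) : μ s k ∉ Set.range (μ t) :=
  fun ⟨_, h⟩ => hst (eq_and_eq_of_apply_eq hμ h).1.symm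

theorem value_le_of_lt {v : Fin n → Fin m → ℝ} {t : Fin T}
    (hμ : Injective fun q : Fin T × Fin n => μ q.1 q.2)
    (hgreedy : ∀ σ : Fin n → Fin m, Injective σ → (∀ i, σ i ∈ unassignedBefore μ t) →
      (∑ i, v i (σ i)) ≤ ∑ i, v i (μ t i))
    {s : Fin T} (hts : t < s) (i k : Fin n) : v i (μ s k) ≤ v i (μ t i) :=
  le_of_isMaxWeight_of_notMem_range (injective_round hμ t) hgreedy
    (fun _ => (mem_unassignedBefore_iff hμ).2 le_rfl) ((mem_unassignedBefore_iff hμ).2 hts.le)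
    (notMem_range_round hμ hts.ne' k) i

end MatchingSchedule

theorem greedy_schedule_EF1_general
    (n T m : ℕ) (hT : 1 ≤ T)
    (v : Fin n → Fin m → ℝ)
    (hv0 : ∀ i j, 0 ≤ v i j)
    (μ : Fin T → Fin n → Fin m)
    (hμ : Function.Bijective (fun q : Fin T × Fin n => μ q.1 q.2))
    (hgreedy : ∀ t : Fin T, ∀ σ : Fin n → Fin m, Function.Injective σ →
      (∀ i, σ i ∈ Finset.univ.filter
        (fun j => ∀ s : Fin T, (s : ℕ) < (t : ℕ) → ∀ i' : Fin n, μ s i' ≠ j)) →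
      (∑ i, v i (σ i)) ≤ ∑ i, v i (μ t i)) :
    ∀ i k : Fin n,
      (Finset.univ.image (fun t => μ t k)) = ∅ ∨
      ∃ j ∈ Finset.univ.image (fun t => μ t k),
        (∑ j' ∈ Finset.univ.image (fun t => μ t i), v i j') ≥
        ∑ j' ∈ (Finset.univ.image (fun t => μ t k)).erase j, v i j' := by
  intro i k
  obtain ⟨N, rfl⟩ : ∃ N, T = N + 1 := ⟨T - 1, by omega⟩
  have h0 : μ 0 k ∈ univ.image fun t => μ t k := mem_image_of_mem _ (mem_univ 0)
  refine .inr ⟨μ 0 k, h0, ?_⟩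
  have hstep (t : Fin N) : v i (μ t.succ k) ≤ v i (μ t.castSucc i) :=
    MatchingSchedule.value_le_of_lt hμ.1 (hgreedy t.castSucc) t.castSucc_lt_succ i k
  rw [sum_erase_eq_sub h0, sum_image (MatchingSchedule.injective_bundle hμ.1 i).injOn,
    sum_image (MatchingSchedule.injective_bundle hμ.1 k).injOn, ge_iff_le, sub_le_iff_le_add']
  exact Fin.sum_le_head_add_sum hstep (hv0 _ _)

/-- If μ is a greedy-optimal matching schedule for additive valuations
with item values in [0,1], then the output allocation of μ is EF1. -/
theorem greedy_schedule_EF1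
    (n T m : ℕ) (hn : 1 ≤ n) (hT : 1 ≤ T) (hm : m = n * T)
    (v : Fin n → Fin m → ℝ)
    (hv0 : ∀ i j, 0 ≤ v i j) (hv1 : ∀ i j, v i j ≤ 1)
    (μ : Fin T → Fin n → Fin m)
    (hμ : Function.Bijective (fun q : Fin T × Fin n => μ q.1 q.2))
    (hgreedy : ∀ t : Fin T, ∀ σ : Fin n → Fin m, Function.Injective σ →
      (∀ i, σ i ∈ Finset.univ.filter
        (fun j => ∀ s : Fin T, (s : ℕ) < (t : ℕ) → ∀ i' : Fin n, μ s i' ≠ j)) →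
      (∑ i, v i (σ i)) ≤ ∑ i, v i (μ t i)) :
    ∀ i k : Fin n,
      (Finset.univ.image (fun t => μ t k)) = ∅ ∨
      ∃ j ∈ Finset.univ.image (fun t => μ t k),
        (∑ j' ∈ Finset.univ.image (fun t => μ t i), v i j') ≥
        ∑ j' ∈ (Finset.univ.image (fun t => μ t k)).erase j, v i j' :=
  greedy_schedule_EF1_general n T m hT v hv0 μ hμ hgreedy
end

section
/- For additive valuations with item values in [0,1]: if an allocation A is both envy-freeable and EF1, then there exists a payment vector p such that (A, p) is envy-free, p i ≤ n − 1 for every agent i, and ∑_{i} p i ≤ (n − 1)². -/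
namespace EFSub

variable {α : Type*}

def pw (w : α → α → ℝ) : List α → ℝ
  | [] => 0
  | [_] => 0
  | a :: b :: l => w a b + pw w (b :: l)

lemma pw_cons_cons (w : α → α → ℝ) (a b : α) (l : List α) :
    pw w (a :: b :: l) = w a b + pw w (b :: l) := rfl

lemma pw_split (w : α → α → ℝ) (a : α) : ∀ (u v : List α),
    pw w (u ++ a :: v) = pw w (u ++ [a]) + pw w (a :: v)
  | [], v => by simp [pw]
  | [x], v => by simp [pw_cons_cons, pw]
  | x :: y :: u, v => by
      have h := pw_split w a (y :: u) v
      simp only [List.cons_append] at *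
      rw [pw_cons_cons, pw_cons_cons, h]
      ring

lemma pw_telescope (w : α → α → ℝ) (q : α → ℝ) (h : ∀ a b, w a b ≤ q a - q b) :
    ∀ (l : List α) (a : α),
      pw w (a :: l) ≤ q a - q ((a :: l).getLast (List.cons_ne_nil a l))
  | [], a => by simp [pw]
  | b :: l, a => by
      have ih := pw_telescope w q h l b
      rw [pw_cons_cons]
      have hlast : (a :: b :: l).getLast (List.cons_ne_nil _ _) =
          (b :: l).getLast (List.cons_ne_nil _ _) := by
        simp [List.getLast]
      rw [hlast]
      have := h a b
      linarith

lemma pw_le_length (w : α → α → ℝ) (h : ∀ a b, w a b ≤ 1) :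
    ∀ (l : List α) (a : α), pw w (a :: l) ≤ l.length
  | [], a => by simp [pw]
  | b :: l, a => by
      have ih := pw_le_length w h l b
      rw [pw_cons_cons]
      have := h a b
      simp only [List.length_cons]
      push_cast
      linarith

lemma exists_dup_split : ∀ (l : List α), ¬ l.Nodup →
    ∃ a l₁ l₂ l₃, l = l₁ ++ a :: (l₂ ++ a :: l₃)
  | [], h => absurd List.nodup_nil h
  | x :: t, h => by
      by_cases hx : x ∈ t
      · obtain ⟨l₂, l₃, rfl⟩ := List.append_of_mem hx
        exact ⟨x, [], l₂, l₃, rfl⟩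
      · have ht : ¬ t.Nodup := by
          intro hnd
          exact h (List.nodup_cons.mpr ⟨hx, hnd⟩)
        obtain ⟨a, l₁, l₂, l₃, rfl⟩ := exists_dup_split t ht
        exact ⟨a, x :: l₁, l₂, l₃, rfl⟩

lemma pw_bound [Fintype α] (w : α → α → ℝ) (q : α → ℝ)
    (hw1 : ∀ a b, w a b ≤ 1) (hq : ∀ a b, w a b ≤ q a - q b) :
    ∀ (l : List α) (a : α), pw w (a :: l) ≤ (Fintype.card α : ℝ) - 1 := by
  have key : ∀ N : ℕ, ∀ l : List α, l.length ≤ N → ∀ a : α,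
      pw w (a :: l) ≤ (Fintype.card α : ℝ) - 1 := by
    intro N
    induction N with
    | zero =>
      intro l hl a
      have : l = [] := List.length_eq_zero_iff.mp (Nat.le_zero.mp hl)
      subst this
      have hcard : 1 ≤ Fintype.card α := Fintype.card_pos_iff.mpr ⟨a⟩
      have : (1 : ℝ) ≤ (Fintype.card α : ℝ) := by exact_mod_cast hcard
      simp [pw]; linarith
    | succ N ih =>
      intro l hl a
      by_cases hnd : (a :: l).Nodup
      · have hlen : (a :: l).length ≤ Fintype.card α := List.Nodup.length_le_card hnd
        have h1 : l.length + 1 ≤ Fintype.card α := by simpa using hlen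
        have h2 : (l.length : ℝ) ≤ (Fintype.card α : ℝ) - 1 := by
          have : (l.length : ℝ) + 1 ≤ (Fintype.card α : ℝ) := by exact_mod_cast h1
          linarith
        exact le_trans (pw_le_length w hw1 l a) h2
      · obtain ⟨b, l₁, l₂, l₃, heq⟩ := exists_dup_split (a :: l) hnd
        have hsplit2 : b :: (l₂ ++ b :: l₃) = (b :: l₂) ++ b :: l₃ := by simp
        have hpw : pw w (a :: l) =
            pw w (l₁ ++ [b]) + (pw w ((b :: l₂) ++ [b]) + pw w (b :: l₃)) := by
          rw [heq, pw_split w b l₁]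
          congr 1
          rw [hsplit2, pw_split w b (b :: l₂) l₃]
        have hcyc : pw w ((b :: l₂) ++ [b]) ≤ 0 := by
          have hform : (b :: l₂) ++ [b] = b :: (l₂ ++ [b]) := by simp
          have htel := pw_telescope w q hq (l₂ ++ [b]) b
          have hlast : ((b :: (l₂ ++ [b])).getLast (List.cons_ne_nil _ _)) = b := by
            simp [List.getLast_append]
          rw [hform]
          rw [hlast] at htel
          linarith
        have hmerge : pw w (l₁ ++ [b]) + pw w (b :: l₃) = pw w (l₁ ++ b :: l₃) :=
          (pw_split w b l₁ l₃).symm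
        have hlenleq : (l₁ ++ b :: l₃).length ≤ N + 1 := by
          have := congrArg List.length heq
          simp at this ⊢
          omega
        rcases hl₁eq : l₁ ++ b :: l₃ with _ | ⟨c, l'⟩
        · exact absurd hl₁eq (by simp)
        · have hl' : l'.length ≤ N := by
            rw [hl₁eq] at hlenleq
            simpa using hlenleq
          have := ih l' hl' c
          rw [hl₁eq] at hmerge
          rw [hpw]
          linarith
  intro l a
  exact key l.length l le_rfl a

end EFSub

/-- For additive valuations with item values in [0,1]: if an allocation
A is both envy-freeable and EF1, then there is a payment vector p with (A, p)
envy-free, p i ≤ n − 1 for every agent i, and ∑ i, p i ≤ (n − 1)². -/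
theorem envy_freeable_and_EF1_subsidy_bound
    (n m : ℕ) (hn : 1 ≤ n)
    (v : Fin n → Fin m → ℝ)
    (hv0 : ∀ i j, 0 ≤ v i j) (hv1 : ∀ i j, v i j ≤ 1)
    (A : Fin n → Finset (Fin m))
    (hdisj : ∀ i k, i ≠ k → Disjoint (A i) (A k))
    (hcover : Finset.univ.biUnion A = Finset.univ)
    (hef : ∃ q : Fin n → ℝ, (∀ i, 0 ≤ q i) ∧
      ∀ i k : Fin n, (∑ j ∈ A i, v i j) + q i ≥ (∑ j ∈ A k, v i j) + q k)
    (hEF1 : ∀ i k : Fin n, A k = ∅ ∨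
      ∃ j ∈ A k, (∑ j' ∈ A i, v i j') ≥ ∑ j' ∈ (A k).erase j, v i j') :
    ∃ p : Fin n → ℝ, (∀ i, 0 ≤ p i) ∧
      (∀ i k : Fin n, (∑ j ∈ A i, v i j) + p i ≥ (∑ j ∈ A k, v i j) + p k) ∧
      (∀ i, p i ≤ (n : ℝ) - 1) ∧
      (∑ i, p i) ≤ ((n : ℝ) - 1) ^ 2 := by
  classical
  obtain ⟨q, hq0, hqEF⟩ := hef
  set w : Fin n → Fin n → ℝ :=
    fun i k => (∑ j ∈ A k, v i j) - (∑ j ∈ A i, v i j) with hwdef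
  have hw1 : ∀ i k, w i k ≤ 1 := by
    intro i k
    rcases hEF1 i k with h | ⟨j, hj, hle⟩
    · have h0 : 0 ≤ ∑ j ∈ A i, v i j := Finset.sum_nonneg fun j _ => hv0 i j
      simp only [hwdef, h, Finset.sum_empty]
      linarith
    · have hsum : ∑ j' ∈ (A k).erase j, v i j' = (∑ j' ∈ A k, v i j') - v i j := by
        rw [← Finset.sum_erase_add (A k) _ hj]; ring
      rw [hsum] at hle
      have := hv1 i j
      simp only [hwdef]
      linarith
  have hwq : ∀ i k, w i k ≤ q i - q k := by
    intro i k
    have := hqEF i k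
    simp only [hwdef]
    linarith
  have hcard : ((Fintype.card (Fin n) : ℕ) : ℝ) = (n : ℝ) := by simp
  set S : Fin n → Set ℝ :=
    fun i => {x | ∃ l : List (Fin n), x = EFSub.pw w (i :: l)} with hSdef
  have hne : ∀ i, (S i).Nonempty := fun i => ⟨EFSub.pw w [i], [], rfl⟩
  have hbdd : ∀ i, BddAbove (S i) := by
    intro i
    refine ⟨(n : ℝ) - 1, ?_⟩
    rintro x ⟨l, rfl⟩
    have := EFSub.pw_bound w q hw1 hwq l i
    rwa [hcard] at this
  set p : Fin n → ℝ := fun i => sSup (S i) with hpdef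
  have hzero : ∀ i, (0 : ℝ) ∈ S i := by
    intro i
    exact ⟨[], by simp [EFSub.pw]⟩
  have hp0 : ∀ i, 0 ≤ p i := fun i => le_csSup (hbdd i) (hzero i)
  have hple : ∀ i, p i ≤ (n : ℝ) - 1 := by
    intro i
    refine csSup_le (hne i) ?_
    rintro x ⟨l, rfl⟩
    have := EFSub.pw_bound w q hw1 hwq l i
    rwa [hcard] at this
  have hEFp : ∀ i k, w i k + p k ≤ p i := by
    intro i k
    have hkk : p k ≤ p i - w i k := by
      refine csSup_le (hne k) ?_
      rintro x ⟨l, rfl⟩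
      have hmem : w i k + EFSub.pw w (k :: l) ∈ S i :=
        ⟨k :: l, (EFSub.pw_cons_cons w i k l).symm⟩
      have := le_csSup (hbdd i) hmem
      linarith
    linarith
  have huniv : (Finset.univ : Finset (Fin n)).Nonempty :=
    ⟨⟨0, hn⟩, Finset.mem_univ _⟩
  obtain ⟨i₀, -, hi₀⟩ := Finset.exists_min_image Finset.univ q huniv
  have hpi₀ : p i₀ = 0 := by
    refine le_antisymm ?_ (hp0 i₀)
    refine csSup_le (hne i₀) ?_
    rintro x ⟨l, rfl⟩
    have htel := EFSub.pw_telescope w q hwq l i₀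
    have hmin := hi₀ ((i₀ :: l).getLast (List.cons_ne_nil _ _)) (Finset.mem_univ _)
    linarith
  have hsum : (∑ i, p i) ≤ ((n : ℝ) - 1) ^ 2 := by
    have hsplit : ∑ i ∈ (Finset.univ.erase i₀), p i + p i₀ = ∑ i, p i :=
      Finset.sum_erase_add _ _ (Finset.mem_univ _)
    have hb : ∑ i ∈ (Finset.univ.erase i₀), p i ≤
        (Finset.univ.erase i₀).card • ((n : ℝ) - 1) :=
      Finset.sum_le_card_nsmul _ _ _ (fun i _ => hple i)
    have hcarde : (Finset.univ.erase i₀).card = n - 1 := by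
      rw [Finset.card_erase_of_mem (Finset.mem_univ _)]
      simp
    rw [hcarde] at hb
    have hcast : ((n - 1 : ℕ) : ℝ) = (n : ℝ) - 1 := by
      rw [Nat.cast_sub hn]; simp
    rw [nsmul_eq_mul, hcast] at hb
    have : ∑ i, p i = ∑ i ∈ (Finset.univ.erase i₀), p i := by
      rw [← hsplit, hpi₀]; ring
    rw [this]
    nlinarith [hb]
  refine ⟨p, hp0, ?_, hple, hsum⟩
  intro i k
  have := hEFp i k
  simp only [hwdef] at this
  linarith
end

section
/- Let A be an envy-freeable allocation such that every arc of the envy graph has weight at least −1, i.e. w_A(i,k) = v_i(A_k) − v_i(A_i) ≥ −1 for all agents i, k. Then there exists a payment vector p such that (A, p) is envy-free and p i ≤ 1 for every agent i. -/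
/-- Let A be an envy-freeable allocation such that every arc of the
envy graph has weight at least −1, i.e. v i (A k) − v i (A i) ≥ −1 for all i, k.
Then there is a payment vector p with (A, p) envy-free and p i ≤ 1 for every i. -/
theorem arc_weights_ge_neg_one_subsidy_one
    (n m : ℕ) (hn : 1 ≤ n)
    (v : Fin n → Finset (Fin m) → ℝ)
    (A : Fin n → Finset (Fin m))
    (hdisj : ∀ i k, i ≠ k → Disjoint (A i) (A k))
    (hcover : Finset.univ.biUnion A = Finset.univ)
    (hef : ∃ q : Fin n → ℝ, (∀ i, 0 ≤ q i) ∧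
      ∀ i k : Fin n, v i (A i) + q i ≥ v i (A k) + q k)
    (harc : ∀ i k : Fin n, v i (A k) - v i (A i) ≥ -1) :
    ∃ p : Fin n → ℝ, (∀ i, 0 ≤ p i) ∧
      (∀ i k : Fin n, v i (A i) + p i ≥ v i (A k) + p k) ∧
      (∀ i, p i ≤ 1) := by
  obtain ⟨q, hq0, hq⟩ := hef
  haveI : NeZero n := ⟨by omega⟩
  obtain ⟨j, hj⟩ := Finset.exists_min_image Finset.univ q ⟨0, Finset.mem_univ 0⟩
  refine ⟨fun i => q i - q j, fun i => by
    have := hj.2 i (Finset.mem_univ i); dsimp only; linarith, fun i k => by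
    have := hq i k; dsimp only; linarith, fun i => ?_⟩
  have h1 := hq j i
  have h2 := harc j i
  dsimp only
  linarith
end

section
/- If μ is a greedy-optimal matching schedule for additive valuations with item values in [0,1] and A is its output allocation, then A is envy-freeable with respect to the modified additive valuations v̄: there exists a payment vector p with v̄_i(A_i) + p i ≥ v̄_i(A_k) + p k for all agents i, k. -/
open Finset

noncomputable def walkSum {n : ℕ} (e : Fin n → Fin n → ℝ) (c : ℕ → Fin n) (r : ℕ) : ℝ :=
  ∑ u ∈ Finset.range r, e (c u) (c (u + 1))

lemma walk_split {n : ℕ} (e : Fin n → Fin n → ℝ) (c : ℕ → Fin n) (s t r : ℕ)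
    (hst : s ≤ t) (htr : t ≤ r) (hcc : c s = c t) :
    walkSum e c r = walkSum e (fun u => if u < s then c u else c (u + (t - s))) (r - (t - s))
      + walkSum e (fun u => c (s + u)) (t - s) := by
  set δ := t - s with hδ
  set c' : ℕ → Fin n := fun u => if u < s then c u else c (u + δ) with hc'
  have hsr : s ≤ r - δ := by omega
  have h1 : walkSum e c r
      = ∑ u ∈ Finset.Ico 0 s, e (c u) (c (u+1))
      + ∑ u ∈ Finset.Ico s t, e (c u) (c (u+1))
      + ∑ u ∈ Finset.Ico t r, e (c u) (c (u+1)) := by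
    rw [walkSum, Finset.range_eq_Ico,
      ← Finset.sum_Ico_consecutive _ (Nat.zero_le t) htr,
      ← Finset.sum_Ico_consecutive _ (Nat.zero_le s) hst]
  have h2 : walkSum e c' (r - δ)
      = ∑ u ∈ Finset.Ico 0 s, e (c' u) (c' (u+1))
      + ∑ u ∈ Finset.Ico s (r - δ), e (c' u) (c' (u+1)) := by
    rw [walkSum, Finset.range_eq_Ico, ← Finset.sum_Ico_consecutive _ (Nat.zero_le s) hsr]
  have hfst : ∀ u ∈ Finset.Ico 0 s, e (c' u) (c' (u+1)) = e (c u) (c (u+1)) := by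
    intro u hu
    rw [Finset.mem_Ico] at hu
    have hcu : c' u = c u := if_pos hu.2
    have hcu1 : c' (u+1) = c (u+1) := by
      by_cases h : u + 1 < s
      · exact if_pos h
      · have hus : u + 1 = s := by omega
        have : c' (u+1) = c (u + 1 + δ) := if_neg h
        rw [this, hus]
        have : s + δ = t := by omega
        rw [this, ← hcc, ← hus]
    rw [hcu, hcu1]
  have hsnd : ∑ u ∈ Finset.Ico s (r - δ), e (c' u) (c' (u+1))
      = ∑ u ∈ Finset.Ico t r, e (c u) (c (u+1)) := by
    rw [Finset.sum_Ico_eq_sum_range, Finset.sum_Ico_eq_sum_range]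
    have hlen : r - δ - s = r - t := by omega
    rw [hlen]
    apply Finset.sum_congr rfl
    intro v hv
    rw [Finset.mem_range] at hv
    have e1 : c' (s + v) = c (t + v) := by
      have : ¬ (s + v < s) := by omega
      rw [hc']; simp only [this, if_false]
      congr 1; omega
    have e2 : c' (s + v + 1) = c (t + v + 1) := by
      have : ¬ (s + v + 1 < s) := by omega
      rw [hc']; simp only [this, if_false]
      congr 1; omega
    rw [e1, e2]
  have hmid : walkSum e (fun u => c (s + u)) δ
      = ∑ u ∈ Finset.Ico s t, e (c u) (c (u+1)) := by
    rw [Finset.sum_Ico_eq_sum_range, walkSum]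
    have : t - s = δ := rfl
    rw [this]
    apply Finset.sum_congr rfl
    intro v hv
    have : s + v + 1 = s + (v + 1) := by omega
    rw [this]
  rw [h1, h2, Finset.sum_congr rfl hfst, hsnd, hmid]
  ring

lemma closed_nonpos {n : ℕ} (e : Fin n → Fin n → ℝ)
    (he0 : ∀ i, e i i = 0)
    (hcyc : ∀ g : Fin n → Fin n, Function.Injective g → ∑ i, e i (g i) ≤ 0) :
    ∀ r (c : ℕ → Fin n), c r = c 0 → walkSum e c r ≤ 0 := by
  intro r
  induction r using Nat.strong_induction_on with
  | _ r IH =>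
  intro c hclosed
  rcases Nat.eq_zero_or_pos r with hr0 | hrpos
  · subst hr0; simp [walkSum]
  by_cases hinj : ∀ u, u < r → ∀ w, w < r → c u = c w → u = w
  · -- cycle case: build injective g
    classical
    have hinj' : ∀ a, a ≤ r → ∀ b, b ≤ r → c a = c b → a = b ∨ (a = 0 ∧ b = r) ∨ (a = r ∧ b = 0) := by
      intro a ha b hb hab
      rcases Nat.lt_or_ge a r with ha' | ha'
      · rcases Nat.lt_or_ge b r with hb' | hb'
        · exact Or.inl (hinj a ha' b hb' hab)
        · have hbr : b = r := by omega
          subst hbr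
          rw [hclosed] at hab
          have := hinj a ha' 0 hrpos hab
          omega
      · have har : a = r := by omega
        rw [har, hclosed] at hab
        rcases Nat.lt_or_ge b r with hb' | hb'
        · have := hinj 0 hrpos b hb' hab
          omega
        · omega
    have hdec : ∀ x : Fin n, Decidable (∃ u, u < r ∧ c u = x) := fun x => Classical.dec _
    let g : Fin n → Fin n := fun x => if h : ∃ u, u < r ∧ c u = x then c (Nat.find h + 1) else x
    have hg_spec : ∀ u, u < r → g (c u) = c (u + 1) := by
      intro u hu
      have h : ∃ w, w < r ∧ c w = c u := ⟨u, hu, rfl⟩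
      have hfind := Nat.find_spec h
      have : Nat.find h = u := hinj _ hfind.1 u hu hfind.2
      simp only [g, dif_pos h, this]
    have hmem_iff : ∀ x : Fin n, (∃ u, u < r ∧ c u = x) ↔ x ∈ (Finset.range r).image c := by
      intro x
      constructor
      · rintro ⟨u, hu, h⟩
        exact Finset.mem_image.mpr ⟨u, Finset.mem_range.mpr hu, h⟩
      · intro hx
        obtain ⟨u, hu, h⟩ := Finset.mem_image.mp hx
        exact ⟨u, Finset.mem_range.mp hu, h⟩
    have hginj : Function.Injective g := by
      intro x y hxy
      by_cases hx : ∃ u, u < r ∧ c u = x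
      · by_cases hy : ∃ u, u < r ∧ c u = y
        · obtain ⟨hux, hcx⟩ := Nat.find_spec hx
          obtain ⟨huy, hcy⟩ := Nat.find_spec hy
          simp only [g, dif_pos hx, dif_pos hy] at hxy
          have hcase := hinj' _ (by omega) _ (by omega) hxy
          have hfind : Nat.find hx = Nat.find hy := by omega
          rw [← hcx, ← hcy, hfind]
        · simp only [g, dif_pos hx, dif_neg hy] at hxy
          exfalso
          apply hy
          obtain ⟨hux, hcx⟩ := Nat.find_spec hx
          rcases Nat.lt_or_ge (Nat.find hx + 1) r with h' | h'
          · exact ⟨_, h', hxy⟩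
          · have : Nat.find hx + 1 = r := by omega
            rw [this, hclosed] at hxy
            exact ⟨0, hrpos, hxy⟩
      · by_cases hy : ∃ u, u < r ∧ c u = y
        · simp only [g, dif_neg hx, dif_pos hy] at hxy
          exfalso
          apply hx
          obtain ⟨huy, hcy⟩ := Nat.find_spec hy
          rcases Nat.lt_or_ge (Nat.find hy + 1) r with h' | h'
          · exact ⟨_, h', hxy.symm⟩
          · have : Nat.find hy + 1 = r := by omega
            rw [this, hclosed] at hxy
            exact ⟨0, hrpos, hxy.symm⟩
        · simpa only [g, dif_neg hx, dif_neg hy] using hxy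
    have himg_inj : ∀ a ∈ Finset.range r, ∀ b ∈ Finset.range r, c a = c b → a = b := by
      intro a ha b hb hab
      rw [Finset.mem_range] at ha hb
      exact hinj a ha b hb hab
    have h0 : ∀ x ∈ (Finset.univ : Finset (Fin n)), x ∉ (Finset.range r).image c →
        e x (g x) = 0 := by
      intro x _ hx
      have hne : ¬ ∃ u, u < r ∧ c u = x := by rw [hmem_iff]; exact hx
      simp only [g, dif_neg hne]
      exact he0 x
    have hsum : ∑ i, e i (g i) = walkSum e c r := by
      rw [← Finset.sum_subset (Finset.subset_univ ((Finset.range r).image c)) h0,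
        Finset.sum_image himg_inj]
      exact Finset.sum_congr rfl (fun u hu => by rw [hg_spec u (Finset.mem_range.mp hu)])
    calc walkSum e c r = ∑ i, e i (g i) := hsum.symm
      _ ≤ 0 := hcyc g hginj
  · -- repeated vertex: split
    push_neg at hinj
    obtain ⟨s, hs, t, ht, hcc, hne⟩ := hinj
    -- wlog s < t
    rcases Nat.lt_or_ge s t with hst | hge
    · have key := walk_split e c s t r (le_of_lt hst) (le_of_lt ht) hcc
      have hmid : walkSum e (fun u => c (s + u)) (t - s) ≤ 0 := by
        apply IH (t - s) (by omega)
        show c (s + (t - s)) = c (s + 0)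
        have h1 : s + (t - s) = t := by omega
        rw [h1, Nat.add_zero, hcc]
      have houter : walkSum e (fun u => if u < s then c u else c (u + (t - s))) (r - (t - s)) ≤ 0 := by
        apply IH (r - (t - s)) (by omega)
        have h1 : ¬ (r - (t - s) < s) := by omega
        simp only [h1, if_false]
        by_cases h2 : 0 < s
        · simp only [h2, if_pos]
          have : r - (t - s) + (t - s) = r := by omega
          rw [this, hclosed]
        · have hs0 : s = 0 := by omega
          simp only [if_neg (by omega : ¬ (0 : ℕ) < s)]
          have hr' : r - (t - s) + (t - s) = r := by omega
          rw [hr', hclosed]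
          subst hs0
          simpa using hcc
      linarith [key]
    · have hst : t < s := by omega
      have key := walk_split e c t s r (le_of_lt hst) (le_of_lt hs) hcc.symm
      have hmid : walkSum e (fun u => c (t + u)) (s - t) ≤ 0 := by
        apply IH (s - t) (by omega)
        show c (t + (s - t)) = c (t + 0)
        have h1 : t + (s - t) = s := by omega
        rw [h1, Nat.add_zero, hcc.symm]
      have houter : walkSum e (fun u => if u < t then c u else c (u + (s - t))) (r - (s - t)) ≤ 0 := by
        apply IH (r - (s - t)) (by omega)
        have h1 : ¬ (r - (s - t) < t) := by omega
        simp only [h1, if_false]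
        by_cases h2 : 0 < t
        · simp only [h2, if_pos]
          have : r - (s - t) + (s - t) = r := by omega
          rw [this, hclosed]
        · have ht0 : t = 0 := by omega
          simp only [if_neg (by omega : ¬ (0 : ℕ) < t)]
          have hr' : r - (s - t) + (s - t) = r := by omega
          rw [hr', hclosed]
          subst ht0
          simpa using hcc.symm
      linarith [key]

noncomputable def dBF {n : ℕ} [NeZero n] (e : Fin n → Fin n → ℝ) : ℕ → Fin n → ℝ
  | 0 => fun _ => 0
  | (r+1) => fun i => max (dBF e r i)
      ((Finset.univ : Finset (Fin n)).sup' Finset.univ_nonempty (fun k => e i k + dBF e r k))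

lemma exists_potential {n : ℕ} (hn : 0 < n) (e : Fin n → Fin n → ℝ)
    (he0 : ∀ i, e i i = 0)
    (hcyc : ∀ g : Fin n → Fin n, Function.Injective g → ∑ i, e i (g i) ≤ 0) :
    ∃ p : Fin n → ℝ, (∀ i, 0 ≤ p i) ∧ ∀ i k, e i k + p k ≤ p i := by
  haveI : NeZero n := ⟨by omega⟩
  have hstep : ∀ r i, dBF e r i ≤ dBF e (r+1) i := fun r i => le_max_left _ _
  have hedge : ∀ r i k, e i k + dBF e r k ≤ dBF e (r+1) i := by
    intro r i k
    exact le_trans (Finset.le_sup' (fun k => e i k + dBF e r k) (Finset.mem_univ k))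
      (le_max_right _ _)
  have hmono : ∀ r1 r2, r1 ≤ r2 → ∀ i, dBF e r1 i ≤ dBF e r2 i := by
    intro r1 r2 h i
    induction r2 with
    | zero => have : r1 = 0 := by omega
              rw [this]
    | succ r ih =>
      rcases Nat.lt_or_ge r1 (r+1) with h' | h'
      · exact le_trans (ih (by omega)) (hstep r i)
      · have : r1 = r + 1 := by omega
        rw [this]
  have hnonneg : ∀ r i, 0 ≤ dBF e r i := by
    intro r i
    have := hmono 0 r (Nat.zero_le r) i
    simpa [dBF] using this
  have hdom : ∀ r (c : ℕ → Fin n), walkSum e c r ≤ dBF e r (c 0) := by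
    intro r
    induction r with
    | zero => intro c; simp [walkSum, dBF]
    | succ r ih =>
      intro c
      have hsplit : walkSum e c (r+1)
          = e (c 0) (c 1) + walkSum e (fun u => c (u+1)) r := by
        rw [walkSum, Finset.sum_range_succ' (fun u => e (c u) (c (u+1))) r]
        rw [walkSum]
        ring
      rw [hsplit]
      calc e (c 0) (c 1) + walkSum e (fun u => c (u+1)) r
          ≤ e (c 0) (c 1) + dBF e r (c 1) := by
            have := ih (fun u => c (u+1))
            linarith
        _ ≤ dBF e (r+1) (c 0) := hedge r (c 0) (c 1)
  have hatt : ∀ r i, ∃ r' ≤ r, ∃ c : ℕ → Fin n, c 0 = i ∧ dBF e r i = walkSum e c r' := by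
    intro r
    induction r with
    | zero =>
      intro i
      exact ⟨0, le_refl 0, fun _ => i, rfl, by simp [walkSum, dBF]⟩
    | succ r ih =>
      intro i
      show ∃ r' ≤ r + 1, _
      rcases max_choice (dBF e r i)
        ((Finset.univ : Finset (Fin n)).sup' Finset.univ_nonempty
          (fun k => e i k + dBF e r k)) with hc | hc
      · obtain ⟨r', hr', c, hc0, hval⟩ := ih i
        exact ⟨r', by omega, c, hc0, by rw [show dBF e (r+1) i = _ from hc, hval]⟩
      · obtain ⟨k, -, hk⟩ := Finset.exists_mem_eq_sup' Finset.univ_nonempty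
          (fun k => e i k + dBF e r k)
        obtain ⟨r', hr', c, hc0, hval⟩ := ih k
        refine ⟨r' + 1, by omega, fun u => Nat.rec i (fun v _ => c v) u, rfl, ?_⟩
        set c1 : ℕ → Fin n := fun u => Nat.rec i (fun v _ => c v) u with hc1
        have hc1_0 : c1 0 = i := rfl
        have hc1_s : ∀ u, c1 (u+1) = c u := fun _ => rfl
        have hrw : walkSum e c1 (r' + 1) = e i k + walkSum e c r' := by
          rw [walkSum, Finset.sum_range_succ' (fun u => e (c1 u) (c1 (u+1))) r']
          simp only [hc1_s, hc1_0]
          rw [walkSum, hc0]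
          ring
        rw [show dBF e (r+1) i = _ from hc, hk, hval, hrw]
  have hstab : ∀ i, dBF e (n+1) i ≤ dBF e n i := by
    intro i
    obtain ⟨r', hr', c, hc0, hval⟩ := hatt (n+1) i
    rw [hval]
    rcases Nat.lt_or_ge r' (n+1) with h' | h'
    · exact le_trans (hc0 ▸ hdom r' c) (hmono r' n (by omega) i)
    · have hr2 : r' = n + 1 := by omega
      have shorten : ∀ (s t : ℕ), s < t → t ≤ r' → c s = c t →
          walkSum e c r' ≤ dBF e n i := by
        intro s t hst htr' hcc
        have key := walk_split e c s t r' (le_of_lt hst) htr' hcc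
        have hmid : walkSum e (fun u => c (s + u)) (t - s) ≤ 0 := by
          apply closed_nonpos e he0 hcyc
          show c (s + (t - s)) = c (s + 0)
          rw [show s + (t - s) = t from by omega, show s + 0 = s from rfl]
          exact hcc.symm
        have houter := hdom (r' - (t - s)) (fun u => if u < s then c u else c (u + (t - s)))
        have hstart : (if 0 < s then c 0 else c (0 + (t - s))) = c 0 := by
          rcases Nat.eq_zero_or_pos s with h0 | h0
          · rw [if_neg (by omega), show 0 + (t - s) = t from by omega, ← hcc, h0]
          · rw [if_pos h0]
        rw [hstart] at houter
        have hlen : r' - (t - s) ≤ n := by omega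
        calc walkSum e c r'
            ≤ walkSum e (fun u => if u < s then c u else c (u + (t - s))) (r' - (t - s)) := by
              linarith [key]
          _ ≤ dBF e (r' - (t - s)) (c 0) := houter
          _ ≤ dBF e n i := hc0 ▸ hmono _ n hlen (c 0)
      have hcard : Fintype.card (Fin n) < Fintype.card (Fin (n+2)) := by simp
      obtain ⟨a, b, hab, hcab⟩ :=
        Fintype.exists_ne_map_eq_of_card_lt (fun u : Fin (n+2) => c u) hcard
      rcases Ne.lt_or_gt hab with hlt | hlt
      · exact shorten a b (Fin.lt_def.mp hlt) (by have := b.2; omega) hcab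
      · exact shorten b a (Fin.lt_def.mp hlt) (by have := a.2; omega) hcab.symm
  refine ⟨dBF e n, fun i => hnonneg n i, fun i k => ?_⟩
  exact le_trans (hedge n i k) (hstab i)

/-- If μ is a greedy-optimal matching schedule for additive valuations
with item values in [0,1] and A is its output allocation, then A is envy-freeable
with respect to the modified additive valuations v̄ (characterized by the
hypotheses `hvbar_self`, `hvbar_mid`, `hvbar_last`). -/
theorem greedy_schedule_envy_freeable_modified
    (n T m : ℕ) (hn : 1 ≤ n) (hT : 1 ≤ T) (hm : m = n * T)
    (v : Fin n → Fin m → ℝ)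
    (hv0 : ∀ i j, 0 ≤ v i j) (hv1 : ∀ i j, v i j ≤ 1)
    (μ : Fin T → Fin n → Fin m)
    (hμ : Function.Bijective (fun q : Fin T × Fin n => μ q.1 q.2))
    (hgreedy : ∀ t : Fin T, ∀ σ : Fin n → Fin m, Function.Injective σ →
      (∀ i, σ i ∈ Finset.univ.filter
        (fun j => ∀ s : Fin T, (s : ℕ) < (t : ℕ) → ∀ i' : Fin n, μ s i' ≠ j)) →
      (∑ i, v i (σ i)) ≤ ∑ i, v i (μ t i))
    (vbar : Fin n → Fin m → ℝ)
    (hvbar_self : ∀ (i : Fin n) (t : Fin T), vbar i (μ t i) = v i (μ t i))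
    (hvbar_mid : ∀ (i k : Fin n), k ≠ i → ∀ (t : Fin T) (h : (t : ℕ) + 1 < T),
      vbar i (μ t k) = max (v i (μ t k)) (v i (μ ⟨(t : ℕ) + 1, h⟩ i)))
    (hvbar_last : ∀ (i k : Fin n), k ≠ i → ∀ t : Fin T, (t : ℕ) + 1 = T →
      vbar i (μ t k) = v i (μ t k)) :
    ∃ p : Fin n → ℝ, (∀ i, 0 ≤ p i) ∧
      ∀ i k : Fin n,
        (∑ j ∈ Finset.univ.image (fun t => μ t i), vbar i j) + p i ≥
        (∑ j ∈ Finset.univ.image (fun t => μ t k), vbar i j) + p k := by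
  have hinj : ∀ (a a' : Fin T) (b b' : Fin n), μ a b = μ a' b' → a = a' ∧ b = b' := by
    intro a a' b b' h
    have h2 : ((a, b) : Fin T × Fin n) = (a', b') := hμ.1 h
    exact ⟨congrArg Prod.fst h2, congrArg Prod.snd h2⟩
  -- Lemma P: welfare maximality over bundle reassignments
  have hM : ∀ g : Fin n → Fin n, Function.Injective g →
      ∑ i, ∑ t, vbar i (μ t (g i)) ≤ ∑ i, ∑ t, vbar i (μ t i) := by
    intro g hg
    calc ∑ i, ∑ t, vbar i (μ t (g i)) = ∑ t, ∑ i, vbar i (μ t (g i)) := Finset.sum_comm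
      _ ≤ ∑ t, ∑ i, vbar i (μ t i) := ?_
      _ = ∑ i, ∑ t, vbar i (μ t i) := Finset.sum_comm
    apply Finset.sum_le_sum
    intro t _
    rcases Nat.lt_or_ge ((t : ℕ) + 1) T with hmid' | hlast'
    · -- middle round
      set t' : Fin T := ⟨(t : ℕ) + 1, hmid'⟩ with ht'
      have hval' : (t' : ℕ) = (t : ℕ) + 1 := rfl
      have htne : t ≠ t' := by
        intro h
        have := congrArg Fin.val h
        omega
      set σ : Fin n → Fin m := fun i =>
        if g i = i then μ t i
        else (if v i (μ t' i) ≤ v i (μ t (g i)) then μ t (g i) else μ t' i) with hσ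
      have hval : ∀ i, v i (σ i) = vbar i (μ t (g i)) := by
        intro i
        by_cases h1 : g i = i
        · simp only [hσ, if_pos h1]
          rw [h1, hvbar_self]
        · rw [hvbar_mid i (g i) h1 t hmid']
          by_cases h2 : v i (μ t' i) ≤ v i (μ t (g i))
          · simp only [hσ, if_neg h1, if_pos h2]
            exact (max_eq_left h2).symm
          · simp only [hσ, if_neg h1, if_neg h2]
            exact (max_eq_right (le_of_not_ge h2)).symm
      have hsinj : Function.Injective σ := by
        intro i i' h
        simp only [hσ] at h
        split_ifs at h with h1 h2 h3 h4 h5 h6 h7 h8 h9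
        all_goals
          obtain ⟨haeq, hbeq⟩ := hinj _ _ _ _ h
        all_goals
          first
            | exact hbeq
            | exact hg hbeq
            | exact absurd haeq htne
            | exact absurd haeq.symm htne
            | (apply hg; rw [‹g i = i›]; exact hbeq)
            | (symm; apply hg; rw [‹g i' = i'›]; exact hbeq.symm)
      have hmem : ∀ i, σ i ∈ Finset.univ.filter
          (fun j => ∀ s : Fin T, (s : ℕ) < (t : ℕ) → ∀ i' : Fin n, μ s i' ≠ j) := by
        intro i
        refine Finset.mem_filter.mpr ⟨Finset.mem_univ _, ?_⟩
        intro s hs i'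
        simp only [hσ]
        split_ifs with h1 h2
        all_goals intro heq
        all_goals
          have haeq := congrArg Fin.val (hinj _ _ _ _ heq).1
        all_goals omega
      calc ∑ i, vbar i (μ t (g i)) = ∑ i, v i (σ i) :=
            (Finset.sum_congr rfl (fun i _ => (hval i))).symm
        _ ≤ ∑ i, v i (μ t i) := hgreedy t σ hsinj hmem
        _ = ∑ i, vbar i (μ t i) :=
            (Finset.sum_congr rfl (fun i _ => (hvbar_self i t).symm))
    · -- last round
      have hlast : (t : ℕ) + 1 = T := by have := t.2; omega
      set σ : Fin n → Fin m := fun i => μ t (g i) with hσ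
      have hval : ∀ i, v i (σ i) = vbar i (μ t (g i)) := by
        intro i
        by_cases h1 : g i = i
        · simp only [hσ]
          rw [h1, hvbar_self]
        · simp only [hσ]
          rw [hvbar_last i (g i) h1 t hlast]
      have hsinj : Function.Injective σ := by
        intro i i' h
        exact hg (hinj _ _ _ _ h).2
      have hmem : ∀ i, σ i ∈ Finset.univ.filter
          (fun j => ∀ s : Fin T, (s : ℕ) < (t : ℕ) → ∀ i' : Fin n, μ s i' ≠ j) := by
        intro i
        refine Finset.mem_filter.mpr ⟨Finset.mem_univ _, ?_⟩
        intro s hs i' heq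
        have haeq := congrArg Fin.val (hinj _ _ _ _ heq).1
        omega
      calc ∑ i, vbar i (μ t (g i)) = ∑ i, v i (σ i) :=
            (Finset.sum_congr rfl (fun i _ => (hval i))).symm
        _ ≤ ∑ i, v i (μ t i) := hgreedy t σ hsinj hmem
        _ = ∑ i, vbar i (μ t i) :=
            (Finset.sum_congr rfl (fun i _ => (hvbar_self i t).symm))
  -- set up envy differences and apply the potential lemma
  set M : Fin n → Fin n → ℝ := fun i k => ∑ t, vbar i (μ t k) with hMdef
  set e : Fin n → Fin n → ℝ := fun i k => M i k - M i i with hedef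
  have he0 : ∀ i, e i i = 0 := fun i => sub_self _
  have hcyc : ∀ g : Fin n → Fin n, Function.Injective g → ∑ i, e i (g i) ≤ 0 := by
    intro g hg
    have h := hM g hg
    have : ∑ i, e i (g i) = (∑ i, M i (g i)) - ∑ i, M i i := by
      rw [← Finset.sum_sub_distrib]
    rw [this]
    simp only [hMdef]
    linarith
  obtain ⟨p, hp1, hp2⟩ := exists_potential (by omega) e he0 hcyc
  refine ⟨p, hp1, ?_⟩
  intro i k
  have himg : ∀ (k i : Fin n),
      ∑ j ∈ Finset.univ.image (fun t => μ t k), vbar i j = ∑ t, vbar i (μ t k) := by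
    intro k i
    rw [Finset.sum_image]
    intro a _ a' _ h
    exact (hinj _ _ _ _ h).1
  rw [ge_iff_le, himg, himg]
  have h := hp2 i k
  simp only [hedef, hMdef] at h
  linarith
end

section
/- For any matching schedule μ for additive valuations with item values in [0,1], with output allocation A and modified additive valuation v̄, every arc of the envy graph under v̄ has weight at least −1: for all agents i, k, v̄_i(A_k) − v̄_i(A_i) ≥ −1. -/
/-- For any matching schedule μ for additive valuations with item
values in [0,1], with output allocation A and modified additive valuation v̄, every
arc of the envy graph under v̄ has weight at least −1:
v̄_i(A_k) − v̄_i(A_i) ≥ −1 for all agents i, k. -/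
theorem modified_arc_weights_ge_neg_one
    (n T m : ℕ) (hn : 1 ≤ n) (hT : 1 ≤ T) (hm : m = n * T)
    (v : Fin n → Fin m → ℝ)
    (hv0 : ∀ i j, 0 ≤ v i j) (hv1 : ∀ i j, v i j ≤ 1)
    (μ : Fin T → Fin n → Fin m)
    (hμ : Function.Bijective (fun q : Fin T × Fin n => μ q.1 q.2))
    (vbar : Fin n → Fin m → ℝ)
    (hvbar_self : ∀ (i : Fin n) (t : Fin T), vbar i (μ t i) = v i (μ t i))
    (hvbar_mid : ∀ (i k : Fin n), k ≠ i → ∀ (t : Fin T) (h : (t : ℕ) + 1 < T),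
      vbar i (μ t k) = max (v i (μ t k)) (v i (μ ⟨(t : ℕ) + 1, h⟩ i)))
    (hvbar_last : ∀ (i k : Fin n), k ≠ i → ∀ t : Fin T, (t : ℕ) + 1 = T →
      vbar i (μ t k) = v i (μ t k)) :
    ∀ i k : Fin n,
      (∑ j ∈ Finset.univ.image (fun t => μ t k), vbar i j) -
      (∑ j ∈ Finset.univ.image (fun t => μ t i), vbar i j) ≥ -1 := by
  intro i k
  have hinj : ∀ c : Fin n, Function.Injective fun t : Fin T => μ t c := by
    intro c t s h
    have h2 := hμ.injective (a₁ := (t, c)) (a₂ := (s, c)) h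
    exact (Prod.ext_iff.mp h2).1
  have hsum : ∀ c : Fin n, (∑ j ∈ Finset.univ.image (fun t => μ t c), vbar i j)
      = ∑ t : Fin T, vbar i (μ t c) := by
    intro c
    rw [Finset.sum_image (fun a _ b _ h => hinj c h)]
  rw [hsum, hsum]
  by_cases hk : k = i
  · subst hk; simp
  · set f : ℕ → ℝ := fun t => if h : t < T then v i (μ ⟨t, h⟩ i) else 0 with hf
    have hAi : ∑ t : Fin T, vbar i (μ t i) = ∑ t ∈ Finset.range T, f t := by
      rw [Finset.sum_range fun t => f t]
      refine Finset.sum_congr rfl fun t _ => ?_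
      rw [hvbar_self i t, hf]
      simp [t.isLt]
    have hlb : ∀ t : Fin T, f ((t : ℕ) + 1) ≤ vbar i (μ t k) := by
      intro t
      rcases lt_or_eq_of_le (Nat.succ_le_of_lt t.isLt) with h | h
      · rw [hvbar_mid i k hk t h, hf]
        simp only [h, dif_pos]
        exact le_trans (le_max_right _ _) (le_refl _)
      · rw [hvbar_last i k hk t h, hf]
        simp only [dif_neg (show ¬((t : ℕ) + 1 < T) by omega)]
        exact hv0 i _
    have hsum_le : ∑ t ∈ Finset.range T, f (t + 1) ≤ ∑ t : Fin T, vbar i (μ t k) := by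
      rw [Finset.sum_range fun t => f (t + 1)]
      exact Finset.sum_le_sum fun t _ => hlb t
    have hshift : ∑ t ∈ Finset.range T, f (t + 1) = (∑ t ∈ Finset.range T, f t) - f 0 := by
      have h1 : ∑ t ∈ Finset.range (T + 1), f t
          = (∑ t ∈ Finset.range T, f (t + 1)) + f 0 := Finset.sum_range_succ' f T
      have h2 : ∑ t ∈ Finset.range (T + 1), f t
          = (∑ t ∈ Finset.range T, f t) + f T := Finset.sum_range_succ f T
      have hfT : f T = 0 := by rw [hf]; simp
      rw [hfT] at h2
      linarith
    have hf0 : f 0 ≤ 1 := by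
      rw [hf]
      have h0 : 0 < T := hT
      simp only [h0, dif_pos]
      exact hv1 i _
    linarith
end

section
/- For monotone valuations and any partial allocation A, there exists a permutation π of Fin n such that the partial allocation B with B_i = A_{π(i)} satisfies: (i) the directed graph on the agents with an arc from i to k whenever v_i(B_k) > v_i(B_i) is acyclic; and (ii) for every agent i, the maximum outgoing envy does not increase: max_{k} (v_i(B_k) − v_i(B_i)) ≤ max_{k} (v_i(A_k) − v_i(A_i)). -/
/-!
Among the reassignments π of the bundles under which no agent is worse off than with her own
bundle, pick one maximising the utilitarian welfare `∑ i, v i (A (π i))`. If the envy graph of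
`A ∘ π` had a cycle, passing the bundles backwards along it would make every agent on the cycle
strictly better off and leave everyone else unchanged, contradicting maximality. The envy bound
is witnessed by `k' = π k`, since nobody's own bundle got worse.
-/

namespace EnvyCycle

variable {α β : Type*}

noncomputable def rotate {k : ℕ} [NeZero k] (c : Fin k ↪ α) : Equiv.Perm α :=
  (Equiv.addRight (1 : Fin k)).viaEmbedding c

section Rotate

variable {k : ℕ} [NeZero k] (c : Fin k ↪ α)

theorem rotate_apply_self (t : Fin k) : rotate c (c t) = c (t + 1) :=
  (Equiv.addRight (1 : Fin k)).viaEmbedding_apply c t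

theorem rotate_apply_of_notMem_range {i : α} (hi : i ∉ Set.range c) : rotate c i = i :=
  Equiv.Perm.viaEmbedding_apply_of_notMem _ c i hi

variable (v : α → β → ℝ) (B : α → β)

theorem le_apply_rotate_of_envy_cycle
    (hcyc : ∀ t, v (c t) (B (c t)) < v (c t) (B (c (t + 1)))) (i : α) :
    v i (B i) ≤ v i (B (rotate c i)) := by
  by_cases hi : i ∈ Set.range c
  · obtain ⟨t, rfl⟩ := hi
    rw [rotate_apply_self]
    exact (hcyc t).le
  · rw [rotate_apply_of_notMem_range c hi]

theorem sum_lt_sum_rotate_of_envy_cycle [Fintype α]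
    (hcyc : ∀ t, v (c t) (B (c t)) < v (c t) (B (c (t + 1)))) :
    ∑ i, v i (B i) < ∑ i, v i (B (rotate c i)) := by
  refine Finset.sum_lt_sum (fun i _ => le_apply_rotate_of_envy_cycle c v B hcyc i)
    ⟨c 0, Finset.mem_univ _, ?_⟩
  rw [rotate_apply_self]
  exact hcyc 0

end Rotate

theorem exists_perm_le_and_no_envy_cycle [Fintype α]
    (v : α → β → ℝ) (A : α → β) :
    ∃ π : Equiv.Perm α, (∀ i, v i (A i) ≤ v i (A (π i))) ∧
      ∀ (k : ℕ) [NeZero k] (c : Fin k ↪ α),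
        ¬ ∀ t, v (c t) (A (π (c t))) < v (c t) (A (π (c (t + 1)))) := by
  classical
  obtain ⟨π, hπ, hmax⟩ :=
    (Finset.univ.filter fun π : Equiv.Perm α => ∀ i, v i (A i) ≤ v i (A (π i))).exists_max_image
      (fun π => ∑ i, v i (A (π i))) ⟨1, by simp⟩
  simp only [Finset.mem_filter, Finset.mem_univ, true_and] at hπ hmax
  refine ⟨π, hπ, fun k _ c hcyc => ?_⟩
  have hle := le_apply_rotate_of_envy_cycle c v (A ∘ π) hcyc
  have hlt := sum_lt_sum_rotate_of_envy_cycle c v (A ∘ π) hcyc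
  exact (hmax (π * rotate c) fun i => (hπ i).trans (hle i)).not_gt hlt

end EnvyCycle

theorem envy_cycles_elimination_general
    (n m : ℕ)
    (v : Fin n → Finset (Fin m) → ℝ)
    (A : Fin n → Finset (Fin m)) :
    ∃ π : Equiv.Perm (Fin n),
      (¬ ∃ (r : ℕ) (c : Fin (r + 2) → Fin n), Function.Injective c ∧
        ∀ t : Fin (r + 2), v (c t) (A (π (c (t + 1)))) > v (c t) (A (π (c t)))) ∧
      (∀ i k : Fin n, ∃ k' : Fin n,
        v i (A (π k)) - v i (A (π i)) ≤ v i (A k') - v i (A i)) := by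
  obtain ⟨π, hπ, hacyclic⟩ := EnvyCycle.exists_perm_le_and_no_envy_cycle v A
  refine ⟨π, ?_, fun i k => ⟨π k, sub_le_sub_left (hπ i) _⟩⟩
  rintro ⟨r, c, hc, hcyc⟩
  exact hacyclic (r + 2) ⟨c, hc⟩ hcyc

/-- For monotone valuations and any partial allocation A, there is a
permutation π of the agents such that the partial allocation B with B i = A (π i)
satisfies: (i) the digraph with an arc from i to k whenever v i (B k) > v i (B i)
is acyclic (it contains no directed cycle on r ≥ 2 distinct agents, encoded with
r = r' + 2); and (ii) for every agent i, the maximum outgoing envy does not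
increase: for every k there is k' with
v i (B k) − v i (B i) ≤ v i (A k') − v i (A i). -/
theorem envy_cycles_elimination
    (n m : ℕ) (hn : 1 ≤ n)
    (v : Fin n → Finset (Fin m) → ℝ)
    (hv0 : ∀ i, v i ∅ = 0)
    (hmono : ∀ i (S T : Finset (Fin m)), S ⊆ T → v i S ≤ v i T)
    (A : Fin n → Finset (Fin m))
    (hdisj : ∀ i k, i ≠ k → Disjoint (A i) (A k)) :
    ∃ π : Equiv.Perm (Fin n),
      (¬ ∃ (r : ℕ) (c : Fin (r + 2) → Fin n), Function.Injective c ∧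
        ∀ t : Fin (r + 2), v (c t) (A (π (c (t + 1)))) > v (c t) (A (π (c t)))) ∧
      (∀ i k : Fin n, ∃ k' : Fin n,
        v i (A (π k)) - v i (A (π i)) ≤ v i (A k') - v i (A i)) :=
  envy_cycles_elimination_general n m v A
end

section
/- For monotone valuations, an EF1 allocation always exists: there is an allocation A such that for every pair of agents i, k, either A_k = ∅ or there exists an item j ∈ A_k with v_i(A_i) ≥ v_i(A_k \ {j}). -/
open Finset

/-- For monotone valuations, an EF1 allocation always exists. -/
theorem EF1_allocation_exists
    (n m : ℕ) (hn : 1 ≤ n)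
    (v : Fin n → Finset (Fin m) → ℝ)
    (hv0 : ∀ i, v i ∅ = 0)
    (hmono : ∀ i (S T : Finset (Fin m)), S ⊆ T → v i S ≤ v i T) :
    ∃ A : Fin n → Finset (Fin m),
      (∀ i k, i ≠ k → Disjoint (A i) (A k)) ∧
      (Finset.univ.biUnion A = Finset.univ) ∧
      (∀ i k : Fin n, A k = ∅ ∨
        ∃ j ∈ A k, v i (A i) ≥ v i ((A k).erase j)) := by
  classical
  suffices h : ∀ S : Finset (Fin m), ∃ A : Fin n → Finset (Fin m),
      (∀ i k, i ≠ k → Disjoint (A i) (A k)) ∧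
      (Finset.univ.biUnion A = S) ∧
      (∀ i k : Fin n, A k = ∅ ∨
        ∃ j ∈ A k, v i (A i) ≥ v i ((A k).erase j)) from h Finset.univ
  intro S
  induction S using Finset.induction with
  | empty =>
    exact ⟨fun _ => ∅, fun i k _ => Finset.disjoint_empty_left _, by ext x; simp,
      fun i k => Or.inl rfl⟩
  | @insert a S' ha ih =>
    obtain ⟨A, hAdisj, hAcov, hAEF1⟩ := ih
    -- the set of good partial allocations of S'
    set P : (Fin n → Finset (Fin m)) → Prop := fun B =>
      (∀ i k, i ≠ k → Disjoint (B i) (B k)) ∧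
      (Finset.univ.biUnion B = S') ∧
      (∀ i k : Fin n, B k = ∅ ∨
        ∃ j ∈ B k, v i (B i) ≥ v i ((B k).erase j)) with hP
    have hAP : P A := ⟨hAdisj, hAcov, hAEF1⟩
    set F : Finset (Fin n → Finset (Fin m)) := Finset.univ.filter P with hF
    have hFne : F.Nonempty := ⟨A, Finset.mem_filter.mpr ⟨Finset.mem_univ _, hAP⟩⟩
    obtain ⟨B, hBF, hBmax⟩ := F.exists_max_image (fun B => ∑ i, v i (B i)) hFne
    have hBP : P B := (Finset.mem_filter.mp hBF).2
    obtain ⟨hBdisj, hBcov, hBEF1⟩ := hBP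
    -- there is an unenvied agent
    have key : ∃ i₀ : Fin n, ∀ i, v i (B i₀) ≤ v i (B i) := by
      by_contra hc
      push_neg at hc
      choose f hf using hc
      -- find a cycle of f
      have a₀ : Fin n := ⟨0, hn⟩
      obtain ⟨p, q, hpq, hfe⟩ : ∃ p q : ℕ, p < q ∧ f^[p] a₀ = f^[q] a₀ := by
        have hcard : Fintype.card (Fin n) < Fintype.card (Fin (n + 1)) := by simp
        obtain ⟨i, j, hij, h⟩ := Fintype.exists_ne_map_eq_of_card_lt
          (fun i : Fin (n + 1) => f^[(i : ℕ)] a₀) hcard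
        rcases lt_or_gt_of_ne (fun e => hij (Fin.val_injective e)) with hl | hl
        · exact ⟨i, j, hl, h⟩
        · exact ⟨j, i, hl, h.symm⟩
      set c : Fin n := f^[p] a₀ with hc
      set t : ℕ := q - p with ht
      have htpos : 0 < t := by omega
      have hcyc : f^[t] c = c := by
        rw [hc, ← Function.iterate_add_apply]
        have h2 : t + p = q := by omega
        rw [h2, ← hfe]
      set O : Finset (Fin n) := (Finset.range t).image (fun s => f^[s] c) with hO
      have hcO : c ∈ O := by
        refine Finset.mem_image.mpr ⟨0, Finset.mem_range.mpr htpos, rfl⟩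
      have hOcyc : ∀ x ∈ O, f^[t] x = x := by
        intro x hx
        obtain ⟨s, _, rfl⟩ := Finset.mem_image.mp hx
        rw [← Function.iterate_add_apply, Nat.add_comm, Function.iterate_add_apply, hcyc]
      set g : Fin n → Fin n := fun x => f^[t - 1] x with hg
      have hgval : ∀ x, g x = f^[t - 1] x := fun _ => rfl
      have hfg : ∀ x ∈ O, f (g x) = x := by
        intro x hx
        have e : f (f^[t - 1] x) = f^[t - 1 + 1] x :=
          (Function.iterate_succ_apply' f (t - 1) x).symm
        rw [hgval, e, show t - 1 + 1 = t by omega, hOcyc x hx]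
      have hgO : ∀ x ∈ O, g x ∈ O := by
        intro x hx
        obtain ⟨s, hs, rfl⟩ := Finset.mem_image.mp hx
        rw [Finset.mem_range] at hs
        rcases Nat.eq_zero_or_pos s with rfl | hspos
        · exact Finset.mem_image.mpr ⟨t - 1, Finset.mem_range.mpr (by omega), rfl⟩
        · have e : g (f^[s] c) = f^[s - 1] c := by
            rw [hgval, ← Function.iterate_add_apply, show t - 1 + s = (s - 1) + t by omega,
              Function.iterate_add_apply, hcyc]
          exact Finset.mem_image.mpr ⟨s - 1, Finset.mem_range.mpr (by omega), e.symm⟩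
      set h : Fin n → Fin n := fun x => if x ∈ O then g x else x with hh
      have hhval : ∀ x, h x = if x ∈ O then g x else x := fun _ => rfl
      have hinj : Function.Injective h := by
        intro x y hxy
        rw [hhval, hhval] at hxy
        by_cases hx : x ∈ O <;> by_cases hy : y ∈ O
        · rw [if_pos hx, if_pos hy] at hxy
          have := congrArg f hxy
          rwa [hfg x hx, hfg y hy] at this
        · rw [if_pos hx, if_neg hy] at hxy
          exact absurd (hxy ▸ hgO x hx) hy
        · rw [if_neg hx, if_pos hy] at hxy
          exact absurd (hxy.symm ▸ hgO y hy) hx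
        · rwa [if_neg hx, if_neg hy] at hxy
      have hsurj : Function.Surjective h := Finite.surjective_of_injective hinj
      set B' : Fin n → Finset (Fin m) := fun x => B (h x) with hB'
      have hB'val : ∀ x, B' x = B (h x) := fun _ => rfl
      have himp : ∀ x, v x (B x) ≤ v x (B' x) := by
        intro x
        rw [hB'val, hhval]
        by_cases hx : x ∈ O
        · rw [if_pos hx]
          have hlt := (hf (g x)).le
          rwa [hfg x hx] at hlt
        · rw [if_neg hx]
      have hstrict : v c (B c) < v c (B' c) := by
        rw [hB'val, hhval, if_pos hcO]
        have hlt := hf (g c)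
        rwa [hfg c hcO] at hlt
      have hB'P : P B' := by
        refine ⟨?_, ?_, ?_⟩
        · intro i k hik
          exact hBdisj _ _ (fun e => hik (hinj e))
        · rw [← hBcov]
          ext x
          simp only [Finset.mem_biUnion, Finset.mem_univ, true_and, hB']
          constructor
          · rintro ⟨i, hi⟩; exact ⟨h i, hi⟩
          · rintro ⟨i, hi⟩
            obtain ⟨i', rfl⟩ := hsurj i
            exact ⟨i', hi⟩
        · intro i k
          rcases hBEF1 i (h k) with h0 | ⟨j, hj, hge⟩
          · exact Or.inl h0
          · exact Or.inr ⟨j, hj, le_trans hge (himp i)⟩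
      have hB'F : B' ∈ F := Finset.mem_filter.mpr ⟨Finset.mem_univ _, hB'P⟩
      have hsum : ∑ x, v x (B x) < ∑ x, v x (B' x) :=
        Finset.sum_lt_sum (fun x _ => himp x) ⟨c, Finset.mem_univ c, hstrict⟩
      exact absurd (hBmax B' hB'F) (not_le.mpr hsum)
    obtain ⟨i₀, hi₀⟩ := key
    -- give item a to the unenvied agent i₀
    have haB : ∀ k, a ∉ B k := by
      intro k hak
      exact ha (hBcov ▸ Finset.mem_biUnion.mpr ⟨k, Finset.mem_univ k, hak⟩)
    set A' : Fin n → Finset (Fin m) := Function.update B i₀ (insert a (B i₀)) with hA'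
    have hA'i₀ : A' i₀ = insert a (B i₀) := Function.update_self _ _ _
    have hA'ne : ∀ k, k ≠ i₀ → A' k = B k := fun k hk => Function.update_of_ne hk _ _
    have hsub : ∀ k, B k ⊆ A' k := by
      intro k
      by_cases hk : k = i₀
      · subst hk; rw [hA'i₀]; exact Finset.subset_insert _ _
      · rw [hA'ne k hk]
    refine ⟨A', ?_, ?_, ?_⟩
    · intro i k hik
      by_cases hi : i = i₀ <;> by_cases hk : k = i₀
      · exact absurd (hi.trans hk.symm) hik
      · subst hi
        rw [hA'i₀, hA'ne k hk]
        exact Finset.disjoint_insert_left.mpr ⟨haB k, hBdisj _ _ hik⟩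
      · subst hk
        rw [hA'i₀, hA'ne i hi]
        exact (Finset.disjoint_insert_left.mpr ⟨haB i, hBdisj _ _ (Ne.symm hik)⟩).symm
      · rw [hA'ne i hi, hA'ne k hk]
        exact hBdisj _ _ hik
    · ext x
      simp only [Finset.mem_biUnion, Finset.mem_univ, true_and, Finset.mem_insert]
      constructor
      · rintro ⟨k, hk⟩
        by_cases hki : k = i₀
        · rw [hki, hA'i₀, Finset.mem_insert] at hk
          rcases hk with rfl | hk
          · exact Or.inl rfl
          · exact Or.inr (hBcov ▸ Finset.mem_biUnion.mpr ⟨i₀, Finset.mem_univ _, hk⟩)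
        · rw [hA'ne k hki] at hk
          exact Or.inr (hBcov ▸ Finset.mem_biUnion.mpr ⟨k, Finset.mem_univ _, hk⟩)
      · rintro (rfl | hx)
        · exact ⟨i₀, by rw [hA'i₀]; exact Finset.mem_insert_self _ _⟩
        · rw [← hBcov] at hx
          obtain ⟨k, _, hk⟩ := Finset.mem_biUnion.mp hx
          exact ⟨k, hsub k hk⟩
    · intro i k
      have hvi : v i (B i) ≤ v i (A' i) := hmono i _ _ (hsub i)
      by_cases hk : k = i₀
      · rw [hk]
        refine Or.inr ⟨a, by rw [hA'i₀]; exact Finset.mem_insert_self _ _, ?_⟩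
        have herase : (A' i₀).erase a = B i₀ := by
          rw [hA'i₀, Finset.erase_insert (haB i₀)]
        rw [herase]
        exact le_trans (hi₀ i) hvi
      · rw [hA'ne k hk]
        rcases hBEF1 i k with h0 | ⟨j, hj, hge⟩
        · exact Or.inl h0
        · exact Or.inr ⟨j, hj, le_trans hge hvi⟩
end
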